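/- arXiv:1308.4219 — 11 statements merged into one kernel-verified Lean document; each statement's English description precedes it below -/
import Mathlib

section
/- If λ = (λ_1, …, λ_m) is a sequence of vectors in ℤ² (m ≥ 5, indices cyclic) such that every pair of cyclically adjacent columns has determinant ±1 (the non-singularity condition for the convex m-gon), then there exist indices i < j with F_i and F_j non-adjacent (i.e. j ≠ i+1 and (i,j) ≠ (1,m)) such that det(λ_i, λ_j) = ±1. -/
/-!
After flipping signs of the columns, read along `ℕ` periodically, we may assume every
consecutive determinant is `1`. Then the Plücker relation gives the three-term recurrence
`det(x, λₙ₊₂) = aₙ det(x, λₙ₊₁) - det(x, λₙ)` with `aₙ = det(λₙ, λₙ₊₂)`. If some `|aₖ| = 1`,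
the columns `k, k + 2` work; if some `aₖ = 0`, then `det(λₖ, λₖ₊₃) = -1` and the columns
`k, k + 3` work. Otherwise every `|aₖ| ≥ 2`, so `|det(λ₀, λₙ)|` is strictly increasing in `n`,
contradicting `det(λ₀, λₘ) = ± det(λ₀, λ₀) = 0`.
-/

open Fin.NatCast

def det2 (x y : Fin 2 → ℤ) : ℤ := x 0 * y 1 - x 1 * y 0

lemma det2_self (x : Fin 2 → ℤ) : det2 x x = 0 := by
  unfold det2; ring

lemma det2_smul (a b : ℤ) (x y : Fin 2 → ℤ) : det2 (a • x) (b • y) = a * b * det2 x y := by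
  simp only [det2, Pi.smul_apply, smul_eq_mul]; ring

section UnimodularChain

variable {L : ℕ → Fin 2 → ℤ} (hL : ∀ k, det2 (L k) (L (k + 1)) = 1)
include hL

lemma det2_add_two (x : Fin 2 → ℤ) (n : ℕ) :
    det2 x (L (n + 2)) = det2 (L n) (L (n + 2)) * det2 x (L (n + 1)) - det2 x (L n) := by
  have h₁ := hL n
  have h₂ := hL (n + 1)
  simp only [det2] at h₁ h₂ ⊢
  linear_combination
    (x 1 * L n 0 - x 0 * L n 1) * h₂ - (x 0 * L (n + 2) 1 - x 1 * L (n + 2) 0) * h₁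

lemma det2_add_three_of_det2_add_two_eq_zero {k : ℕ} (h : det2 (L k) (L (k + 2)) = 0) :
    det2 (L k) (L (k + 3)) = -1 := by
  rw [det2_add_two hL (L k) (k + 1), h, hL k]; ring

lemma strictMono_abs_det2 (h2 : ∀ k, 2 ≤ |det2 (L k) (L (k + 2))|) :
    StrictMono fun n => |det2 (L 0) (L n)| := by
  refine strictMono_nat_of_lt_succ fun n => ?_
  induction n with
  | zero => simp [det2_self, hL 0]
  | succ n ih =>
    have hmul : 2 * |det2 (L 0) (L (n + 1))| ≤
        |det2 (L n) (L (n + 2)) * det2 (L 0) (L (n + 1))| := by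
      rw [abs_mul]; exact mul_le_mul_of_nonneg_right (h2 n) (abs_nonneg _)
    have := abs_sub_abs_le_abs_sub
      (det2 (L n) (L (n + 2)) * det2 (L 0) (L (n + 1))) (det2 (L 0) (L n))
    simp only [det2_add_two hL (L 0) n] at this ⊢
    linarith

lemma exists_isUnit_det2_add_two_or_three {n : ℕ} (hn : 0 < n) (h0 : det2 (L 0) (L n) = 0) :
    ∃ k, IsUnit (det2 (L k) (L (k + 2))) ∨ IsUnit (det2 (L k) (L (k + 3))) := by
  by_contra! h
  have h2 : ∀ k, 2 ≤ |det2 (L k) (L (k + 2))| := fun k => by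
    have hne : det2 (L k) (L (k + 2)) ≠ 0 := fun hz =>
      (h k).2 (Int.isUnit_iff.mpr (Or.inr (det2_add_three_of_det2_add_two_eq_zero hL hz)))
    have := Int.isUnit_iff.not.mp (h k).1
    rcases abs_cases (det2 (L k) (L (k + 2))) with ⟨_, _⟩ | ⟨_, _⟩ <;> omega
  have := strictMono_abs_det2 hL h2 hn
  simp [h0, det2_self] at this

end UnimodularChain

section SignNormalization

variable (f : ℕ → Fin 2 → ℤ)

def chainSign : ℕ → ℤ
  | 0 => 1
  | k + 1 => chainSign k * det2 (f k) (f (k + 1))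

def normalizeChain (k : ℕ) : Fin 2 → ℤ := chainSign f k • f k

variable {f} (hf : ∀ k, IsUnit (det2 (f k) (f (k + 1))))
include hf

lemma isUnit_chainSign (k : ℕ) : IsUnit (chainSign f k) := by
  induction k with
  | zero => exact isUnit_one
  | succ k ih => exact ih.mul (hf k)

lemma det2_normalizeChain_succ (k : ℕ) :
    det2 (normalizeChain f k) (normalizeChain f (k + 1)) = 1 := by
  have hs := Int.isUnit_sq (isUnit_chainSign hf k)
  have hd := Int.isUnit_sq (hf k)
  rw [normalizeChain, normalizeChain, det2_smul, chainSign]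
  linear_combination det2 (f k) (f (k + 1)) ^ 2 * hs + hd

lemma isUnit_det2_normalizeChain_iff (p q : ℕ) :
    IsUnit (det2 (normalizeChain f p) (normalizeChain f q)) ↔ IsUnit (det2 (f p) (f q)) := by
  rw [normalizeChain, normalizeChain, det2_smul,
    IsUnit.mul_iff, IsUnit.mul_iff, and_iff_right (isUnit_chainSign hf p),
    and_iff_right (isUnit_chainSign hf q)]

end SignNormalization

lemma natCast_ne_natCast_add {m : ℕ} [NeZero m] (a : ℕ) {d : ℕ} (hd₀ : 0 < d) (hdm : d < m) :
    (a : Fin m) ≠ ((a + d : ℕ) : Fin m) := by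
  rw [Nat.cast_add, ne_eq, left_eq_add, Fin.natCast_eq_zero]
  exact fun h => absurd (Nat.le_of_dvd hd₀ h) (by omega)

lemma natCast_nonadjacent {m : ℕ} [NeZero m] (k : ℕ) {c : ℕ} (hc : 2 ≤ c) (hcm : c + 1 < m) :
    (k : Fin m) ≠ ((k + c : ℕ) : Fin m) ∧ ((k + c : ℕ) : Fin m) ≠ (k : Fin m) + 1 ∧
      (k : Fin m) ≠ ((k + c : ℕ) : Fin m) + 1 := by
  refine ⟨natCast_ne_natCast_add k (by omega) (by omega), ?_, ?_⟩
  · have h := natCast_ne_natCast_add (m := m) (k + 1) (d := c - 1) (by omega) (by omega)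
    rw [show k + 1 + (c - 1) = k + c by omega, Nat.cast_succ] at h
    exact h.symm
  · have h := natCast_ne_natCast_add (m := m) k (d := c + 1) (by omega) (by omega)
    rwa [← add_assoc, Nat.cast_succ] at h

/-- Every characteristic matrix on the convex `m`-gon (`m ≥ 5`) is decomposable:
there exist two non-(cyclically-)adjacent columns whose determinant is `±1`. -/
theorem stmt_1 (m : ℕ) [NeZero m] (hm : 5 ≤ m) (lam : Fin m → Fin 2 → ℤ)
    (hadj : ∀ i : Fin m,
      lam i 0 * lam (i + 1) 1 - lam i 1 * lam (i + 1) 0 = 1 ∨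
      lam i 0 * lam (i + 1) 1 - lam i 1 * lam (i + 1) 0 = -1) :
    ∃ i j : Fin m, i ≠ j ∧ j ≠ i + 1 ∧ i ≠ j + 1 ∧
      (lam i 0 * lam j 1 - lam i 1 * lam j 0 = 1 ∨
       lam i 0 * lam j 1 - lam i 1 * lam j 0 = -1) := by
  set f : ℕ → Fin 2 → ℤ := fun k => lam k
  have hf : ∀ k, IsUnit (det2 (f k) (f (k + 1))) := fun k => by
    simpa only [f, det2, Nat.cast_succ, Int.isUnit_iff] using hadj k
  have hperiod : det2 (normalizeChain f 0) (normalizeChain f m) = 0 := by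
    simp only [normalizeChain, det2_smul, f, Fin.natCast_self, Nat.cast_zero, det2_self, mul_zero]
  obtain ⟨k, hk⟩ := exists_isUnit_det2_add_two_or_three (det2_normalizeChain_succ hf)
    (by omega) hperiod
  simp only [isUnit_det2_normalizeChain_iff hf, Int.isUnit_iff] at hk
  rcases hk with hk | hk
  · obtain ⟨h₁, h₂, h₃⟩ := natCast_nonadjacent (m := m) k (c := 2) le_rfl (by omega)
    exact ⟨k, (k + 2 : ℕ), h₁, h₂, h₃, hk⟩
  · obtain ⟨h₁, h₂, h₃⟩ := natCast_nonadjacent (m := m) k (c := 3) (by omega) (by omega)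
    exact ⟨k, (k + 3 : ℕ), h₁, h₂, h₃, hk⟩
end

section
/- There exists no 4×8 matrix λ over ℤ/2 of the form (I₄ | A) such that for every subset {i₁,i₂,i₃,i₄} ⊆ {1,…,8} satisfying Gale's dual evenness condition for C⁴(8)* (i.e. the subset is a disjoint union of intervals I_j = {j, j+1} ∩ {1,…,8} for j ∈ {0,…,8}), the corresponding 4×4 minor of λ is nonzero in ℤ/2. -/
/-- The 4×4 minor of a (4 × ℕ-indexed, 1-based columns) `ℤ/2`-matrix on columns `a,b,c,d`. -/
def minor4 (lam : Fin 4 → ℕ → ZMod 2) (a b c d : ℕ) : ZMod 2 :=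
  Matrix.det (Matrix.of fun (p q : Fin 4) => lam p (![a, b, c, d] q))

/-!
Write `λ = (I₄ | A)` and let `v₅, …, v₈` be the columns of `A`. A minor of `λ` containing
identity columns is, up to sign, a minor of `A`: the faces `{2,3,4,5}` and `{1,2,4,5}` say that
`v₅` has nonzero first and third entries, the faces `{i,i+1,k,k+1}` with `i ≤ 3` give three
`2 × 2` minors of the pairs `v₆, v₇` and `v₇, v₈`, and `{4,5,6,7}`, `{4,5,7,8}` give `3 × 3`
minors on the first three rows. A finite check shows that over `ℤ/2` these conditions force
`v₈ = v₆ + t v₇`, so the minor on the face `{5,6,7,8}`, which is `det A`, vanishes.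
-/

theorem Matrix.det_eq_zero_of_col_eq_add_smul {n R : Type*} [Fintype n] [DecidableEq n]
    [CommRing R] (M : Matrix n n R) {i j k : n} (hki : k ≠ i) (hkj : k ≠ j) (t : R)
    (h : ∀ p, M p k = M p i + t * M p j) : M.det = 0 := by
  set N := M.updateCol k fun p => M p i
  have hN : M = N.updateCol k fun p => N p k + t • N p j := by
    ext p q
    by_cases hq : q = k
    · subst hq
      simp [N, Matrix.updateCol_ne hkj.symm, h]
    · simp [N, hq]
  rw [hN, Matrix.det_updateCol_add_smul_self N hkj t]
  exact Matrix.det_zero_of_column_eq hki fun p => by simp [N, Matrix.updateCol_ne hki.symm]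

def PairMinorsNeZero (u w : Fin 4 → ZMod 2) : Prop :=
  !![u 2, w 2; u 3, w 3].det ≠ 0 ∧ !![u 0, w 0; u 3, w 3].det ≠ 0 ∧
    !![u 0, w 0; u 1, w 1].det ≠ 0

def topMinor3 (u v w : Fin 4 → ZMod 2) : ZMod 2 :=
  !![u 0, v 0, w 0; u 1, v 1, w 1; u 2, v 2, w 2].det

-- The binders are ordered so that `decide` prunes the search over `(ℤ/2)¹⁶` early.
theorem exists_eq_add_smul_of_minors_ne_zero (u : Fin 4 → ZMod 2) (hu₀ : u 0 ≠ 0)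
    (hu₂ : u 2 ≠ 0) (v w : Fin 4 → ZMod 2) (hvw : PairMinorsNeZero v w)
    (huvw : topMinor3 u v w ≠ 0) (x : Fin 4 → ZMod 2) (hwx : PairMinorsNeZero w x)
    (huwx : topMinor3 u w x ≠ 0) :
    ∃ t : ZMod 2, x = v + t • w := by
  revert u hu₀ hu₂ v w hvw huvw x hwx huwx
  simp only [PairMinorsNeZero, topMinor3, Matrix.det_fin_two, Matrix.det_fin_three]
  decide

section minor4

variable {lam : Fin 4 → ℕ → ZMod 2}

theorem minor4_eq_zero_of_col_eq_add_smul {a b c d : ℕ} (t : ZMod 2)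
    (h : ∀ p, lam p d = lam p b + t * lam p c) : minor4 lam a b c d = 0 :=
  Matrix.det_eq_zero_of_col_eq_add_smul (i := 1) (j := 2) (k := 3) _ (by decide) (by decide) t h

theorem col_eq_ite_of_identity
    (hid : ∀ i j : Fin 4, lam i ((j : ℕ) + 1) = if i = j then 1 else 0) :
    (∀ p, lam p 1 = if p = 0 then 1 else 0) ∧ (∀ p, lam p 2 = if p = 1 then 1 else 0) ∧
      (∀ p, lam p 3 = if p = 2 then 1 else 0) ∧ (∀ p, lam p 4 = if p = 3 then 1 else 0) :=
  ⟨fun p => hid p 0, fun p => hid p 1, fun p => hid p 2, fun p => hid p 3⟩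

theorem apply_zero_ne_zero_of_minor4_ne_zero
    (hid : ∀ i j : Fin 4, lam i ((j : ℕ) + 1) = if i = j then 1 else 0) {k : ℕ}
    (h : minor4 lam 2 3 4 k ≠ 0) : lam 0 k ≠ 0 := by
  obtain ⟨-, c₂, c₃, c₄⟩ := col_eq_ite_of_identity hid
  simpa [minor4, Matrix.det_succ_column_zero, Fin.sum_univ_succ, Fin.succAbove, c₂, c₃, c₄]
    using h

theorem apply_two_ne_zero_of_minor4_ne_zero
    (hid : ∀ i j : Fin 4, lam i ((j : ℕ) + 1) = if i = j then 1 else 0) {k : ℕ}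
    (h : minor4 lam 1 2 4 k ≠ 0) : lam 2 k ≠ 0 := by
  obtain ⟨c₁, c₂, -, c₄⟩ := col_eq_ite_of_identity hid
  simpa [minor4, Matrix.det_succ_column_zero, Fin.sum_univ_succ, Fin.succAbove, c₁, c₂, c₄]
    using h

theorem pairMinorsNeZero_of_minor4_ne_zero
    (hid : ∀ i j : Fin 4, lam i ((j : ℕ) + 1) = if i = j then 1 else 0) {k : ℕ}
    (h₁₂ : minor4 lam 1 2 k (k + 1) ≠ 0) (h₂₃ : minor4 lam 2 3 k (k + 1) ≠ 0)
    (h₃₄ : minor4 lam 3 4 k (k + 1) ≠ 0) : PairMinorsNeZero (lam · k) (lam · (k + 1)) := by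
  obtain ⟨c₁, c₂, c₃, c₄⟩ := col_eq_ite_of_identity hid
  refine ⟨?_, ?_, ?_⟩
  · simpa [minor4, Matrix.det_succ_column_zero, Fin.sum_univ_succ, Fin.succAbove, c₁, c₂]
      using h₁₂
  · simpa [minor4, Matrix.det_succ_column_zero, Fin.sum_univ_succ, Fin.succAbove, c₂, c₃]
      using h₂₃
  · simpa [minor4, Matrix.det_succ_column_zero, Fin.sum_univ_succ, Fin.succAbove, c₃, c₄]
      using h₃₄

theorem topMinor3_ne_zero_of_minor4_ne_zero
    (hid : ∀ i j : Fin 4, lam i ((j : ℕ) + 1) = if i = j then 1 else 0) {k l m : ℕ}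
    (h : minor4 lam 4 k l m ≠ 0) : topMinor3 (lam · k) (lam · l) (lam · m) ≠ 0 := by
  obtain ⟨-, -, -, c₄⟩ := col_eq_ite_of_identity hid
  simpa [minor4, topMinor3, Matrix.det_succ_column_zero, Fin.sum_univ_succ, Fin.succAbove,
    Matrix.det_fin_three, c₄] using h

end minor4

/-- There is no real characteristic matrix of the form `(I₄ | A)` on `C⁴(8)*`:
no 4×8 matrix over `ℤ/2` whose first four columns form the identity and whose 4×4 minors
on all maximal simplices of `K_{C⁴(8)*}` (the sets `{1,i,i+1,8}` for `2 ≤ i ≤ 6` and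
`{i,i+1,j,j+1}` for `1 ≤ i < j-1 ≤ 6`, the disjoint unions of Gale intervals) are nonzero. -/
theorem stmt_4 :
    ¬ ∃ lam : Fin 4 → ℕ → ZMod 2,
      (∀ i j : Fin 4, lam i ((j : ℕ) + 1) = if i = j then 1 else 0) ∧
      (∀ i : ℕ, 2 ≤ i → i ≤ 6 → minor4 lam 1 i (i + 1) 8 ≠ 0) ∧
      (∀ i j : ℕ, 1 ≤ i → i + 1 < j → j ≤ 7 → minor4 lam i (i + 1) j (j + 1) ≠ 0) := by
  rintro ⟨lam, hid, -, hgale⟩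
  have face (i j : ℕ) (hij : 1 ≤ i ∧ i + 1 < j ∧ j ≤ 7) := hgale i j hij.1 hij.2.1 hij.2.2
  obtain ⟨t, ht⟩ := exists_eq_add_smul_of_minors_ne_zero (lam · 5)
    (apply_zero_ne_zero_of_minor4_ne_zero hid (face 2 4 (by norm_num)))
    (apply_two_ne_zero_of_minor4_ne_zero hid (face 1 4 (by norm_num)))
    (lam · 6) (lam · 7)
    (pairMinorsNeZero_of_minor4_ne_zero hid (face 1 6 (by norm_num)) (face 2 6 (by norm_num))
      (face 3 6 (by norm_num)))
    (topMinor3_ne_zero_of_minor4_ne_zero hid (face 4 6 (by norm_num)))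
    (lam · 8)
    (pairMinorsNeZero_of_minor4_ne_zero hid (face 1 7 (by norm_num)) (face 2 7 (by norm_num))
      (face 3 7 (by norm_num)))
    (topMinor3_ne_zero_of_minor4_ne_zero hid (face 4 7 (by norm_num)))
  exact face 5 7 (by norm_num) (minor4_eq_zero_of_col_eq_add_smul t fun p => congrFun ht p)
end

section
/- For every m ≥ 8, there exists no real characteristic matrix on the dual cyclic polytope C⁴(m)*: that is, no 4×m matrix over ℤ/2 such that for every vertex-set of C⁴(m)* (every 4-subset of {1,…,m} of the form {1,i,i+1,m} with 2 ≤ i ≤ m-2, or {i,i+1,j,j+1} with 1 ≤ i < j-1 ≤ m-2) the corresponding 4×4 minor is nonzero in ℤ/2. -/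
/-!
Left multiplication by `g ∈ GL₄(𝔽₂)` multiplies every minor by `det g`, and `{1,2,3,4}` is the
set `{i,i+1,j,j+1}` for `(i,j) = (1,3)`, so we may assume that the first four columns form the
standard basis. Already the sets `{i,i+1,j,j+1}` with `j ≤ 7` then leave only 4, 12 and 8
possibilities for the columns 5, 5–6 and 5–7 respectively, and none of the last ones extends to
an eighth column.
-/

open Matrix

def det4 (a b c d : Fin 4 → ZMod 2) : ZMod 2 :=
  (Matrix.of ![a, b, c, d]).det

def column (lam : Fin 4 → ℕ → ZMod 2) (n : ℕ) : Fin 4 → ZMod 2 := fun p => lam p n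

theorem minor4_eq_det4 (lam : Fin 4 → ℕ → ZMod 2) (a b c d : ℕ) :
    minor4 lam a b c d = det4 (column lam a) (column lam b) (column lam c) (column lam d) := by
  rw [minor4, det4, ← det_transpose]
  congr 1
  ext q p
  fin_cases q <;> rfl

theorem minor4_mulVec (g : Matrix (Fin 4) (Fin 4) (ZMod 2)) (lam : Fin 4 → ℕ → ZMod 2)
    (a b c d : ℕ) :
    minor4 (fun p n => (g *ᵥ column lam n) p) a b c d = g.det * minor4 lam a b c d := by
  rw [minor4, minor4, ← det_mul]
  rfl

theorem exists_column_eq_single_and_minor4_ne_zero_iff (lam : Fin 4 → ℕ → ZMod 2)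
    (h : minor4 lam 1 2 3 4 ≠ 0) :
    ∃ lam' : Fin 4 → ℕ → ZMod 2, (∀ q : Fin 4, column lam' (q + 1) = Pi.single q 1) ∧
      ∀ a b c d : ℕ, minor4 lam' a b c d ≠ 0 ↔ minor4 lam a b c d ≠ 0 := by
  set A : Matrix (Fin 4) (Fin 4) (ZMod 2) := Matrix.of fun p q => lam p (q + 1)
  have hA : A.det = minor4 lam 1 2 3 4 := by
    rw [minor4]
    congr 1
    ext p q
    fin_cases q <;> rfl
  have hunit : IsUnit A.det := isUnit_iff_ne_zero.mpr (hA ▸ h)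
  refine ⟨fun p n => (A⁻¹ *ᵥ column lam n) p, fun q => ?_, fun a b c d => ?_⟩
  · have : column lam (q + 1) = A *ᵥ Pi.single q 1 := by
      ext p
      simp [A, column]
    ext p
    simp only [column, this, mulVec_mulVec, nonsing_inv_mul A hunit, one_mulVec]
  · rw [minor4_mulVec, mul_ne_zero_iff, and_iff_right]
    exact (isUnit_nonsing_inv_det A hunit).ne_zero

/- Each column is quantified only after the conditions on the previous ones, so that the exhaustive
search prunes early. -/
set_option synthInstance.maxSize 1024 in
theorem det4_cyclic_eq_zero_of_eq_single :
    ∀ v₁ : Fin 4 → ZMod 2, v₁ = Pi.single 0 1 → ∀ v₂ : Fin 4 → ZMod 2, v₂ = Pi.single 1 1 →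
    ∀ v₃ : Fin 4 → ZMod 2, v₃ = Pi.single 2 1 → ∀ v₄ : Fin 4 → ZMod 2, v₄ = Pi.single 3 1 →
    ∀ v₅ : Fin 4 → ZMod 2, det4 v₁ v₂ v₄ v₅ ≠ 0 → det4 v₂ v₃ v₄ v₅ ≠ 0 →
    ∀ v₆ : Fin 4 → ZMod 2, det4 v₁ v₂ v₅ v₆ ≠ 0 → det4 v₂ v₃ v₅ v₆ ≠ 0 →
      det4 v₃ v₄ v₅ v₆ ≠ 0 →
    ∀ v₇ : Fin 4 → ZMod 2, det4 v₁ v₂ v₆ v₇ ≠ 0 → det4 v₂ v₃ v₆ v₇ ≠ 0 →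
      det4 v₃ v₄ v₆ v₇ ≠ 0 → det4 v₄ v₅ v₆ v₇ ≠ 0 →
    ∀ v₈ : Fin 4 → ZMod 2, det4 v₁ v₂ v₇ v₈ ≠ 0 → det4 v₂ v₃ v₇ v₈ ≠ 0 →
      det4 v₃ v₄ v₇ v₈ ≠ 0 → det4 v₄ v₅ v₇ v₈ ≠ 0 → det4 v₅ v₆ v₇ v₈ = 0 := by
  decide +kernel

theorem not_forall_det4_cyclic_ne_zero (v : ℕ → Fin 4 → ZMod 2)
    (hbasis : ∀ q : Fin 4, v (q + 1) = Pi.single q 1) :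
    ¬ ∀ i j : ℕ, 1 ≤ i → i + 1 < j → j ≤ 7 → det4 (v i) (v (i + 1)) (v j) (v (j + 1)) ≠ 0 := by
  intro h
  have H (i j : ℕ) (hi : 1 ≤ i := by norm_num) (hij : i + 1 < j := by norm_num)
      (hj : j ≤ 7 := by norm_num) := h i j hi hij hj
  refine absurd ?_ (H 5 7)
  exact det4_cyclic_eq_zero_of_eq_single (v 1) (hbasis 0) (v 2) (hbasis 1) (v 3) (hbasis 2)
    (v 4) (hbasis 3) (v 5) (H 1 4) (H 2 4) (v 6) (H 1 5) (H 2 5) (H 3 5)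
    (v 7) (H 1 6) (H 2 6) (H 3 6) (H 4 6) (v 8) (H 1 7) (H 2 7) (H 3 7) (H 4 7)

/-- For every `m ≥ 8` there is no real characteristic matrix on `C⁴(m)*`: no 4×m matrix
over `ℤ/2` whose 4×4 minors on all vertex sets of `C⁴(m)*` (the sets `{1,i,i+1,m}` with
`2 ≤ i ≤ m-2` and `{i,i+1,j,j+1}` with `1 ≤ i < j-1 ≤ m-2`) are nonzero. -/
theorem stmt_5 (m : ℕ) (hm : 8 ≤ m) :
    ¬ ∃ lam : Fin 4 → ℕ → ZMod 2,
      (∀ i : ℕ, 2 ≤ i → i ≤ m - 2 → minor4 lam 1 i (i + 1) m ≠ 0) ∧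
      (∀ i j : ℕ, 1 ≤ i → i + 1 < j → j ≤ m - 1 → minor4 lam i (i + 1) j (j + 1) ≠ 0) := by
  rintro ⟨lam, -, hcyc⟩
  obtain ⟨lam', hbasis, hiff⟩ :=
    exists_column_eq_single_and_minor4_ne_zero_iff lam (hcyc 1 3 le_rfl (by norm_num) (by omega))
  refine not_forall_det4_cyclic_ne_zero (column lam') hbasis fun i j hi hij hj => ?_
  rw [← minor4_eq_det4, hiff]
  exact hcyc i j hi hij (by omega)
end

section
/- Up to the left action of GL(4, ℤ/2), there are exactly two real characteristic matrices on C⁴(7)*, namely (I₄ | A₁) and (I₄ | A₂) where A₁ has columns (1,1,1,0), (0,1,1,1), (1,1,0,1) and A₂ has columns (1,0,1,1), (1,1,1,0), (0,1,1,1). -/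
/-- The 4×4 minor of a 4×7 `ℤ/2`-matrix on columns `a,b,c,d` (0-based). -/
def minorC47 (lam : Matrix (Fin 4) (Fin 7) (ZMod 2)) (a b c d : Fin 7) : ZMod 2 :=
  (lam.submatrix id ![a, b, c, d]).det

/-- `lam` is a real characteristic matrix on `C⁴(7)*`: the 4×4 minors on the 14 maximal
simplices of `K_{C⁴(7)*}` (written 0-based) are all nonzero. -/
def isRCM47 (lam : Matrix (Fin 4) (Fin 7) (ZMod 2)) : Prop :=
  minorC47 lam 0 1 2 3 ≠ 0 ∧ minorC47 lam 1 2 3 4 ≠ 0 ∧ minorC47 lam 0 1 3 4 ≠ 0 ∧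
  minorC47 lam 0 2 3 6 ≠ 0 ∧ minorC47 lam 0 1 2 6 ≠ 0 ∧ minorC47 lam 0 1 4 5 ≠ 0 ∧
  minorC47 lam 0 1 5 6 ≠ 0 ∧ minorC47 lam 1 2 4 5 ≠ 0 ∧ minorC47 lam 1 2 5 6 ≠ 0 ∧
  minorC47 lam 2 3 4 5 ≠ 0 ∧ minorC47 lam 2 3 5 6 ≠ 0 ∧ minorC47 lam 0 3 4 6 ≠ 0 ∧
  minorC47 lam 0 4 5 6 ≠ 0 ∧ minorC47 lam 3 4 5 6 ≠ 0

/-- `(I₄ | A₁)` with `A₁` having columns `(1,1,1,0), (0,1,1,1), (1,1,0,1)`. -/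
def Lam1 : Matrix (Fin 4) (Fin 7) (ZMod 2) :=
  !![1,0,0,0,1,0,1; 0,1,0,0,1,1,1; 0,0,1,0,1,1,0; 0,0,0,1,0,1,1]

/-- `(I₄ | A₂)` with `A₂` having columns `(1,0,1,1), (1,1,1,0), (0,1,1,1)`. -/
def Lam2 : Matrix (Fin 4) (Fin 7) (ZMod 2) :=
  !![1,0,0,0,1,1,0; 0,1,0,0,0,1,1; 0,0,1,0,1,1,1; 0,0,0,1,1,0,1]

/-!
The facet `{1,2,3,4}` makes the first four columns of a characteristic matrix `λ` a basis, so
`g = (λ restricted to them)⁻¹` brings `λ` to the normal form `(I₄ | A)`. Left multiplication by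
`g` scales every maximal minor by `det g`, so `(I₄ | A)` is again characteristic, and an element
of `GL(4, ℤ/2)` carrying one normal form to another is the identity on the first block, hence
trivial. Finally the 14 minors of `(I₄ | A)` are polynomial conditions on the entries of `A`
whose only solutions over `ℤ/2` are `A₁` and `A₂`.
-/

theorem Matrix.det_fin_four {R : Type*} [CommRing R] (A : Matrix (Fin 4) (Fin 4) R) :
    A.det = A 0 0 * det !![A 1 1, A 1 2, A 1 3; A 2 1, A 2 2, A 2 3; A 3 1, A 3 2, A 3 3]
      - A 0 1 * det !![A 1 0, A 1 2, A 1 3; A 2 0, A 2 2, A 2 3; A 3 0, A 3 2, A 3 3]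
      + A 0 2 * det !![A 1 0, A 1 1, A 1 3; A 2 0, A 2 1, A 2 3; A 3 0, A 3 1, A 3 3]
      - A 0 3 * det !![A 1 0, A 1 1, A 1 2; A 2 0, A 2 1, A 2 2; A 3 0, A 3 1, A 3 2] := by
  have h1 : (Fin.succAbove 1 2 : Fin 4) = 3 := rfl
  have h2 : (Fin.succAbove 2 2 : Fin 4) = 3 := rfl
  have h3 : (Fin.succAbove 3 2 : Fin 4) = 2 := rfl
  simp only [Matrix.det_succ_row_zero (n := 3), Fin.isValue, Matrix.det_fin_three,
    Matrix.submatrix_apply, Fin.succ_zero_eq_one, Fin.succ_one_eq_two, Fin.reduceSucc,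
    Fin.sum_univ_succ, Fin.coe_ofNat_eq_mod, Nat.zero_mod, pow_zero, one_mul, Fin.zero_succAbove,
    Fin.val_succ, ne_eq, Fin.succ_ne_zero, not_false_eq_true, Fin.succAbove_ne_zero_zero,
    Fin.succ_succAbove_one, zero_add, pow_one, neg_mul, h1, h2, h3, Finset.univ_unique,
    Fin.default_eq_zero, Fin.val_eq_zero, Finset.sum_singleton, Matrix.of_apply, Matrix.cons_val', Matrix.cons_val_zero, Matrix.cons_val_fin_one,
    Matrix.cons_val_one, Matrix.cons_val]
  ring

theorem Matrix.submatrix_id_mul {m n p q R : Type*} [Fintype n] [Mul R] [AddCommMonoid R]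
    (M : Matrix m n R) (N : Matrix n p R) (f : q → p) :
    (M * N).submatrix id f = M * N.submatrix id f := by
  rw [Matrix.submatrix_mul _ _ _ id _ Function.bijective_id, Matrix.submatrix_id_id]

section StdForm

variable {R : Type*} {n k : ℕ}

def stdForm [Zero R] [One R] (A : Matrix (Fin n) (Fin k) R) : Matrix (Fin n) (Fin (n + k)) R :=
  Matrix.of fun i => Fin.append ((1 : Matrix (Fin n) (Fin n) R) i) (A i)

theorem stdForm_submatrix_castAdd [Zero R] [One R] (A : Matrix (Fin n) (Fin k) R) :
    (stdForm A).submatrix id (Fin.castAdd k) = 1 := by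
  ext i j
  simp [stdForm]

theorem stdForm_four_three [Zero R] [One R] (a b c d e f g h i j k l : R) :
    stdForm !![a, b, c; d, e, f; g, h, i; j, k, l] =
      !![1, 0, 0, 0, a, b, c; 0, 1, 0, 0, d, e, f; 0, 0, 1, 0, g, h, i; 0, 0, 0, 1, j, k, l] := by
  ext r s
  fin_cases r <;> fin_cases s <;> rfl

theorem exists_isUnit_det_mul_eq_stdForm [CommRing R] (lam : Matrix (Fin n) (Fin (n + k)) R)
    (h : IsUnit (lam.submatrix id (Fin.castAdd k)).det) :
    ∃ g : Matrix (Fin n) (Fin n) R, IsUnit g.det ∧ ∃ A, g * lam = stdForm A := by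
  set M := lam.submatrix id (Fin.castAdd k)
  refine ⟨M⁻¹, M.isUnit_nonsing_inv_det h, (M⁻¹ * lam).submatrix id (Fin.natAdd n), ?_⟩
  ext i j
  refine Fin.addCases (fun j => ?_) (fun j => ?_) j
  · have := congr_fun (congr_fun (M.nonsing_inv_mul h) i) j
    simpa [stdForm, Matrix.mul_apply, M] using this
  · simp [stdForm]

theorem eq_one_of_mul_stdForm_eq_stdForm [CommRing R] {g : Matrix (Fin n) (Fin n) R}
    {A B : Matrix (Fin n) (Fin k) R} (h : g * stdForm A = stdForm B) : g = 1 := by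
  simpa [Matrix.submatrix_id_mul, stdForm_submatrix_castAdd] using
    congr_arg (Matrix.submatrix · id (Fin.castAdd k)) h

end StdForm

theorem minorC47_mul (g : Matrix (Fin 4) (Fin 4) (ZMod 2)) (lam : Matrix (Fin 4) (Fin 7) (ZMod 2))
    (a b c d : Fin 7) : minorC47 (g * lam) a b c d = g.det * minorC47 lam a b c d := by
  rw [minorC47, minorC47, Matrix.submatrix_id_mul, Matrix.det_mul]

theorem isRCM47_mul_iff {g : Matrix (Fin 4) (Fin 4) (ZMod 2)} (hg : IsUnit g.det)
    (lam : Matrix (Fin 4) (Fin 7) (ZMod 2)) : isRCM47 (g * lam) ↔ isRCM47 lam := by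
  simp only [isRCM47, minorC47_mul, ne_eq, mul_eq_zero, hg.ne_zero, false_or]

theorem minorC47_zero_one_two_three_eq_det (lam : Matrix (Fin 4) (Fin 7) (ZMod 2)) :
    minorC47 lam 0 1 2 3 = (lam.submatrix id (Fin.castAdd 3)).det := by
  rw [minorC47]
  congr
  ext j
  fin_cases j <;> rfl

def A₁ : Matrix (Fin 4) (Fin 3) (ZMod 2) := !![1, 0, 1; 1, 1, 1; 1, 1, 0; 0, 1, 1]

def A₂ : Matrix (Fin 4) (Fin 3) (ZMod 2) := !![1, 1, 0; 0, 1, 1; 1, 1, 1; 1, 0, 1]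

set_option maxRecDepth 100000 in
set_option synthInstance.maxSize 100000 in
set_option synthInstance.maxHeartbeats 400000 in
theorem isRCM47_stdForm_iff (A : Matrix (Fin 4) (Fin 3) (ZMod 2)) :
    isRCM47 (stdForm A) ↔ A = A₁ ∨ A = A₂ := by
  obtain ⟨a, b, c, d, e, f, g, h, i, j, k, l, rfl⟩ : ∃ a b c d e f g h i j k l : ZMod 2,
      A = !![a, b, c; d, e, f; g, h, i; j, k, l] :=
    ⟨_, _, _, _, _, _, _, _, _, _, _, _, (Matrix.etaExpand_eq A).symm⟩
  rw [stdForm_four_three]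
  simp only [isRCM47, minorC47, Matrix.det_fin_four, Matrix.submatrix_apply, id_eq,
    Matrix.cons_val_zero, Matrix.of_apply, Matrix.cons_val', Matrix.cons_val_fin_one,
    Matrix.cons_val_one, Matrix.cons_val, Matrix.det_fin_three, mul_one, mul_zero, sub_zero,
    add_zero, sub_self, ne_eq, one_ne_zero, not_false_eq_true, zero_mul, zero_add, one_mul,
    zero_sub, ZMod.neg_eq_self_mod_two, true_and]
  -- The minors are now polynomial conditions on the twelve entries; check all `2 ^ 12` cases.
  revert a b c d e f g h i j k l
  decide +kernel

/-- Up to the left `GL(4, ℤ/2)`-action there are exactly two real characteristic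
matrices on `C⁴(7)*`, namely `Lam1` and `Lam2`. -/
theorem stmt_6 :
    isRCM47 Lam1 ∧ isRCM47 Lam2 ∧
    (∀ lam, isRCM47 lam →
      (∃ g : Matrix (Fin 4) (Fin 4) (ZMod 2), IsUnit g.det ∧ g * lam = Lam1) ∨
      (∃ g : Matrix (Fin 4) (Fin 4) (ZMod 2), IsUnit g.det ∧ g * lam = Lam2)) ∧
    ¬ ∃ g : Matrix (Fin 4) (Fin 4) (ZMod 2), IsUnit g.det ∧ g * Lam1 = Lam2 := by
  have hLam1 : Lam1 = stdForm A₁ := by rw [A₁, stdForm_four_three]; rfl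
  have hLam2 : Lam2 = stdForm A₂ := by rw [A₂, stdForm_four_three]; rfl
  refine ⟨?_, ?_, fun lam hlam => ?_, ?_⟩
  · rw [hLam1, isRCM47_stdForm_iff]
    exact .inl rfl
  · rw [hLam2, isRCM47_stdForm_iff]
    exact .inr rfl
  · have hM : IsUnit (lam.submatrix id (Fin.castAdd 3)).det := by
      rw [← minorC47_zero_one_two_three_eq_det]
      exact isUnit_iff_ne_zero.2 hlam.1
    obtain ⟨g, hg, A, hgA⟩ := exists_isUnit_det_mul_eq_stdForm (n := 4) (k := 3) lam hM
    have hA := (isRCM47_mul_iff hg lam).2 hlam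
    rw [hgA, isRCM47_stdForm_iff] at hA
    rcases hA with rfl | rfl
    · exact .inl ⟨g, hg, hgA.trans hLam1.symm⟩
    · exact .inr ⟨g, hg, hgA.trans hLam2.symm⟩
  · rintro ⟨g, -, hg⟩
    rw [hLam1, hLam2] at hg
    obtain rfl := eq_one_of_mul_stdForm_eq_stdForm hg
    rw [Matrix.one_mul, ← hLam1, ← hLam2] at hg
    exact absurd hg (by decide)
end

section
/- If λ is a real characteristic matrix on C^{n+1}(m+1)* whose first column is e₁ and whose rows 2 through n+1 restricted to columns 2 through m+1 form a matrix A, and whose first row is (1, a₂, …, a_m), then A is a real characteristic matrix on C^n(m)*. (Precisely: if {i₁,…,i_n} is a maximal simplex of K_{C^n(m)*} then {1, i₁+1, …, i_n+1} is a maximal simplex of K_{C^{n+1}(m+1)*}, and the corresponding minor of A equals the corresponding minor of λ, hence is nonzero.) -/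
/-- The Gale interval `I_j = {j, j+1} ∩ {1,…,m}`. -/
def galeInterval (m j : ℕ) : Finset ℕ := ({j, j + 1} : Finset ℕ) ∩ Finset.Icc 1 m

/-- `S` is a maximal simplex of `K_{Cⁿ(m)*}` (dual Gale evenness): an `n`-subset of
`{1,…,m}` which is a disjoint union of Gale intervals. -/
def IsGaleFacet (n m : ℕ) (S : Finset ℕ) : Prop :=
  S.card = n ∧ ∃ J : Finset ℕ, J ⊆ Finset.range (m + 1) ∧
    (∀ a ∈ J, ∀ b ∈ J, a ≠ b → Disjoint (galeInterval m a) (galeInterval m b)) ∧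
    S = J.biUnion (galeInterval m)

/-- `M` (an `n×m` matrix over `ℤ/2`, columns indexed 1-based by `ℕ`) is a real
characteristic matrix on `Cⁿ(m)*`: every `n×n` minor on a maximal simplex is nonzero. -/
def IsRealCharMat (n m : ℕ) (M : Fin n → ℕ → ZMod 2) : Prop :=
  ∀ cols : Fin n → ℕ, Function.Injective cols →
    IsGaleFacet n m (Finset.image cols Finset.univ) →
    Matrix.det (Matrix.of fun p q => M p (cols q)) ≠ 0

lemma mem_galeInterval {m j x : ℕ} :
    x ∈ galeInterval m j ↔ (x = j ∨ x = j + 1) ∧ 1 ≤ x ∧ x ≤ m := by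
  simp [galeInterval]

lemma facet_mem {n m : ℕ} {S : Finset ℕ} (h : IsGaleFacet n m S) :
    ∀ x ∈ S, 1 ≤ x ∧ x ≤ m := by
  obtain ⟨-, J, -, -, rfl⟩ := h
  intro x hx
  simp only [Finset.mem_biUnion] at hx
  obtain ⟨a, -, hxa⟩ := hx
  exact (mem_galeInterval.mp hxa).2

lemma part1 (n m : ℕ) : ∀ S : Finset ℕ, IsGaleFacet n m S →
    IsGaleFacet (n + 1) (m + 1) (insert 1 (S.image (· + 1))) := by
  intro S hS
  have hmem := facet_mem hS
  obtain ⟨hcard, J, hJsub, hJdisj, hSeq⟩ := hS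
  constructor
  · rw [Finset.card_insert_of_notMem, Finset.card_image_of_injective _ (add_left_injective 1),
      hcard]
    simp only [Finset.mem_image]
    rintro ⟨y, hy, hy1⟩
    have := hmem y hy
    omega
  · have hdisj' : ∀ c ∈ J, ∀ d ∈ J, c ≠ d →
        Disjoint (galeInterval (m + 1) (c + 1)) (galeInterval (m + 1) (d + 1)) := by
      intro c hc d hd hcd
      have hdis := hJdisj c hc d hd hcd
      rw [Finset.disjoint_left] at hdis ⊢
      intro x hxa hxb
      rw [mem_galeInterval] at hxa hxb
      exact hdis (a := x - 1) (mem_galeInterval.mpr (by omega)) (mem_galeInterval.mpr (by omega))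
    by_cases h0 : 0 ∈ J
    · refine ⟨J.image (· + 1), ?_, ?_, ?_⟩
      · intro a ha
        simp only [Finset.mem_image] at ha
        obtain ⟨c, hc, rfl⟩ := ha
        have := hJsub hc
        simp only [Finset.mem_range] at this ⊢
        omega
      · intro a ha b hb hab
        simp only [Finset.mem_image] at ha hb
        obtain ⟨c, hc, rfl⟩ := ha
        obtain ⟨d, hd, rfl⟩ := hb
        exact hdisj' c hc d hd (by omega)
      · ext x
        simp only [Finset.mem_insert, Finset.mem_image, Finset.mem_biUnion, hSeq,
          mem_galeInterval]
        constructor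
        · rintro (rfl | ⟨y, ⟨a, ha, hya⟩, rfl⟩)
          · exact ⟨1, ⟨0, h0, rfl⟩, by omega⟩
          · exact ⟨a + 1, ⟨a, ha, rfl⟩, by omega⟩
        · rintro ⟨b, ⟨c, hc, rfl⟩, hx⟩
          by_cases hx1 : x = 1
          · exact Or.inl hx1
          · exact Or.inr ⟨x - 1, ⟨c, hc, by omega⟩, by omega⟩
    · refine ⟨insert 0 (J.image (· + 1)), ?_, ?_, ?_⟩
      · intro a ha
        simp only [Finset.mem_insert, Finset.mem_image] at ha
        rcases ha with rfl | ⟨c, hc, rfl⟩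
        · simp
        · have := hJsub hc
          simp only [Finset.mem_range] at this ⊢
          omega
      · intro a ha b hb hab
        simp only [Finset.mem_insert, Finset.mem_image] at ha hb
        have key : ∀ c ∈ J, Disjoint (galeInterval (m + 1) 0) (galeInterval (m + 1) (c + 1)) := by
          intro c hc
          rw [Finset.disjoint_left]
          intro x hx hx'
          rw [mem_galeInterval] at hx hx'
          have : c = 0 := by omega
          exact h0 (this ▸ hc)
        rcases ha with rfl | ⟨c, hc, rfl⟩ <;> rcases hb with rfl | ⟨d, hd, rfl⟩
        · omega
        · exact key d hd
        · exact (key c hc).symm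
        · exact hdisj' c hc d hd (by omega)
      · ext x
        simp only [Finset.mem_insert, Finset.mem_image, Finset.mem_biUnion, hSeq,
          mem_galeInterval]
        constructor
        · rintro (rfl | ⟨y, ⟨a, ha, hya⟩, rfl⟩)
          · exact ⟨0, Or.inl rfl, by omega⟩
          · exact ⟨a + 1, Or.inr ⟨a, ha, rfl⟩, by omega⟩
        · rintro ⟨b, hb, hx⟩
          rcases hb with rfl | ⟨c, hc, rfl⟩
          · left; omega
          · have hc0 : c ≠ 0 := fun h => h0 (h ▸ hc)
            exact Or.inr ⟨x - 1, ⟨c, hc, by omega⟩, by omega⟩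

/-- If a real characteristic matrix `lam` on `C^{n+1}(m+1)*` has first column `e₁`, then
the lower-right `n×m` block is a real characteristic matrix on `Cⁿ(m)*`; indeed each
maximal simplex `{i₁,…,iₙ}` of `K_{Cⁿ(m)*}` yields the maximal simplex
`{1, i₁+1, …, iₙ+1}` of `K_{C^{n+1}(m+1)*}`. -/
theorem stmt_7 (n m : ℕ) (lam : Fin (n + 1) → ℕ → ZMod 2)
    (hcol1 : ∀ i : Fin (n + 1), lam i 1 = if i = 0 then 1 else 0)
    (hlam : IsRealCharMat (n + 1) (m + 1) lam) :
    (∀ S : Finset ℕ, IsGaleFacet n m S →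
      IsGaleFacet (n + 1) (m + 1) (insert 1 (S.image (· + 1)))) ∧
    IsRealCharMat n m (fun i j => lam i.succ (j + 1)) := by
  refine ⟨part1 n m, ?_⟩
  intro cols hinj hfacet
  have h1 : ∀ q, 1 ≤ cols q ∧ cols q ≤ m := fun q =>
    facet_mem hfacet _ (Finset.mem_image_of_mem cols (Finset.mem_univ q))
  have hcs : ∀ q : Fin n, (Fin.cons 1 (fun q => cols q + 1) : Fin (n + 1) → ℕ) q.succ
      = cols q + 1 := fun q => Fin.cons_succ _ _ q
  have hc0 : (Fin.cons 1 (fun q => cols q + 1) : Fin (n + 1) → ℕ) 0 = 1 := rfl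
  have hinj' : Function.Injective (Fin.cons 1 (fun q => cols q + 1) : Fin (n + 1) → ℕ) := by
    intro a b hab
    induction a using Fin.cases with
    | zero =>
      induction b using Fin.cases with
      | zero => rfl
      | succ b => rw [hc0, hcs] at hab; exact absurd hab (by have := h1 b; omega)
    | succ a =>
      induction b using Fin.cases with
      | zero => rw [hc0, hcs] at hab; exact absurd hab (by have := h1 a; omega)
      | succ b => rw [hcs, hcs] at hab; exact congrArg Fin.succ (hinj (by omega))
  have himage : Finset.image (Fin.cons 1 (fun q => cols q + 1) : Fin (n + 1) → ℕ) Finset.univ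
      = insert 1 ((Finset.image cols Finset.univ).image (· + 1)) := by
    ext x
    simp only [Finset.mem_image, Finset.mem_insert, Finset.mem_univ, true_and]
    constructor
    · rintro ⟨i, rfl⟩
      induction i using Fin.cases with
      | zero => exact Or.inl hc0
      | succ i => exact Or.inr ⟨cols i, ⟨i, rfl⟩, (hcs i).symm⟩
    · rintro (rfl | ⟨y, ⟨q, rfl⟩, rfl⟩)
      · exact ⟨0, hc0⟩
      · exact ⟨q.succ, hcs q⟩
  have hdet := hlam _ hinj' (by rw [himage]; exact part1 n m _ hfacet)
  have key : Matrix.det (Matrix.of fun p q => lam p ((Fin.cons 1 (fun q => cols q + 1) : Fin (n + 1) → ℕ) q))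
      = Matrix.det (Matrix.of fun (p q : Fin n) => lam p.succ (cols q + 1)) := by
    rw [Matrix.det_succ_column_zero, Finset.sum_eq_single 0]
    · simp [hcol1, Matrix.submatrix, Fin.succAbove_zero, Fin.cons_succ]
    · intro i _ hi
      simp [hcol1 i, hi, Fin.cons_zero]
    · simp
  rw [key] at hdet
  exact hdet
end

section
/- Any real characteristic matrix on C³(m)* with m > 5 is decomposable: there exists k with 2 < k < m-1 such that the minor on columns {1, k, m} is nonzero in ℤ/2. -/
/-!
If all minors on `{1, k, m}` with `2 < k < m - 1` vanished, the three-term Grassmann–Plücker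
relation for the columns `1, 3, 4, 2, m` would give `[1 3 4] * [1 2 m] = 0`, contradicting the
non-vanishing minors on the maximal simplices `{1, 3, 4}` and `{1, 2, m}`.
-/

/-- The 3×3 minor of a (3 × ℕ-indexed, 1-based columns) `ℤ/2`-matrix on columns `a,b,c`. -/
def minor3 (M : Fin 3 → ℕ → ZMod 2) (a b c : ℕ) : ZMod 2 :=
  Matrix.det (Matrix.of fun (p q : Fin 3) => M p (![a, b, c] q))

open Matrix

theorem Matrix.det_fin_three_plucker {R : Type*} [CommRing R] (a b c d e : Fin 3 → R) :
    det (of ![a, b, c]) * det (of ![a, d, e]) - det (of ![a, b, d]) * det (of ![a, c, e])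
      + det (of ![a, b, e]) * det (of ![a, c, d]) = 0 := by
  simp only [det_fin_three, of_apply, cons_val_zero, cons_val_one, cons_val_two, head_cons,
    tail_cons]
  ring

theorem minor3_eq_det (M : Fin 3 → ℕ → ZMod 2) (a b c : ℕ) :
    minor3 M a b c = det (of ![fun p => M p a, fun p => M p b, fun p => M p c]) := by
  rw [minor3, ← det_transpose]
  congr 1
  ext i p
  fin_cases i <;> rfl

theorem minor3_plucker (M : Fin 3 → ℕ → ZMod 2) (a b c d e : ℕ) :
    minor3 M a b c * minor3 M a d e - minor3 M a b d * minor3 M a c e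
      + minor3 M a b e * minor3 M a c d = 0 := by
  simp only [minor3_eq_det, det_fin_three_plucker]

/-- Any real characteristic matrix on `C³(m)*` with `m > 5` is decomposable: some minor
on columns `{1, k, m}` with `2 < k < m-1` is nonzero. -/
theorem stmt_10 (m : ℕ) (hm : 5 < m) (M : Fin 3 → ℕ → ZMod 2)
    (h1 : ∀ i : ℕ, 2 ≤ i → i ≤ m - 1 → minor3 M 1 i (i + 1) ≠ 0)
    (h2 : ∀ i : ℕ, 1 ≤ i → i ≤ m - 2 → minor3 M i (i + 1) m ≠ 0) :
    ∃ k : ℕ, 2 < k ∧ k < m - 1 ∧ minor3 M 1 k m ≠ 0 := by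
  by_contra! h
  have h13m : minor3 M 1 3 m = 0 := h 3 (by norm_num) (by omega)
  have h14m : minor3 M 1 4 m = 0 := h 4 (by norm_num) (by omega)
  have h134 : minor3 M 1 3 4 ≠ 0 := h1 3 (by norm_num) (by omega)
  have h12m : minor3 M 1 2 m ≠ 0 := h2 1 le_rfl (by omega)
  have hplucker := minor3_plucker M 1 3 4 2 m
  rw [h13m, h14m, mul_zero, zero_mul, sub_zero, add_zero] at hplucker
  exact mul_ne_zero h134 h12m hplucker
end

section
/- For m > 5, the automorphism group of the simplicial complex K_{C³(m)*} is generated by the permutation σ sending i to m+1-i (the full reversal) and the transposition τ = (1 m); moreover every automorphism fixing 1, 2, m-1, and m is the identity. -/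
/-- Maximal faces of `K_{C³(m)*}`: `{1,i,i+1}` for `2 ≤ i ≤ m-1` and `{i,i+1,m}`
for `1 ≤ i ≤ m-2`. -/
def faceC3 (m : ℕ) (S : Finset ℕ) : Prop :=
  (∃ i, 2 ≤ i ∧ i ≤ m - 1 ∧ S = {1, i, i + 1}) ∨
  (∃ i, 1 ≤ i ∧ i ≤ m - 2 ∧ S = {i, i + 1, m})

/-- An automorphism of `K_{C³(m)*}`: a permutation supported on `{1,…,m}` carrying
maximal faces to maximal faces bijectively. -/
def IsAutC3 (m : ℕ) (π : Equiv.Perm ℕ) : Prop :=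
  (∀ x, x ∉ Finset.Icc 1 m → π x = x) ∧
  ∀ S : Finset ℕ, faceC3 m S ↔ faceC3 m (S.image π)

/-- The full reversal `i ↦ m + 1 - i` on `{1,…,m}`. -/
def revPerm (m : ℕ) : Equiv.Perm ℕ :=
  Function.Involutive.toPerm (fun x => if 1 ≤ x ∧ x ≤ m then m + 1 - x else x)
    (by intro x; dsimp only; split_ifs <;> omega)
section Aux

variable {m : ℕ}

lemma image_triple (f : ℕ → ℕ) (a b c : ℕ) :
    ({a, b, c} : Finset ℕ).image f = {f a, f b, f c} := by
  simp [Finset.image_insert]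

lemma rev_apply (m x : ℕ) :
    revPerm m x = if 1 ≤ x ∧ x ≤ m then m + 1 - x else x := rfl

lemma rev_val {x : ℕ} (h1 : 1 ≤ x) (h2 : x ≤ m) : revPerm m x = m + 1 - x := by
  rw [rev_apply]; split_ifs with h <;> omega

lemma face_range {S : Finset ℕ} (hS : faceC3 m S) {x : ℕ} (hx : x ∈ S) :
    1 ≤ x ∧ x ≤ m := by
  rcases hS with ⟨i, hi2, him, rfl⟩ | ⟨i, hi1, him, rfl⟩ <;>
    simp only [Finset.mem_insert, Finset.mem_singleton] at hx <;> omega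

lemma face_sub (hm : 5 < m) {S : Finset ℕ} {v : ℕ} (hS : faceC3 m S) (hv : v ∈ S)
    (h2 : 2 ≤ v) (hvm : v ≤ m - 1) : S ⊆ {1, v - 1, v, v + 1, m} := by
  rcases hS with ⟨i, hi2, him, rfl⟩ | ⟨i, hi1, him, rfl⟩ <;>
      simp only [Finset.mem_insert, Finset.mem_singleton] at hv <;>
      intro x hx <;>
      simp only [Finset.mem_insert, Finset.mem_singleton] at hx ⊢ <;> omega

lemma face_F12 (hm : 5 < m) {S : Finset ℕ} {j : ℕ} (hS : faceC3 m S) (h1 : 1 ∈ S)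
    (hj : j ∈ S) (hj2 : 2 ≤ j) (hjm : j ≤ m - 2) :
    S = {1, j - 1, j} ∨ S = {1, j, j + 1} ∨ S = {1, 2, m} := by
  rcases hS with ⟨i, hi2, him, rfl⟩ | ⟨i, hi1, him, rfl⟩ <;>
    simp only [Finset.mem_insert, Finset.mem_singleton] at h1 hj
  · rcases hj with h | h | h
    · omega
    · right; left; subst h; rfl
    · left; ext x; simp only [Finset.mem_insert, Finset.mem_singleton]; try omega
  · right; right
    have hi : i = 1 := by omega
    subst hi; ext x; simp only [Finset.mem_insert, Finset.mem_singleton]; try omega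

lemma face_F3 (hm : 5 < m) {S : Finset ℕ} (hS : faceC3 m S) (h1 : 1 ∈ S) (hmem : m ∈ S) :
    S = {1, m - 1, m} ∨ S = {1, 2, m} := by
  rcases hS with ⟨i, hi2, him, rfl⟩ | ⟨i, hi1, him, rfl⟩ <;>
    simp only [Finset.mem_insert, Finset.mem_singleton] at h1 hmem
  · left
    have hi : i = m - 1 := by omega
    subst hi; ext x; simp only [Finset.mem_insert, Finset.mem_singleton]; try omega
  · right
    have hi : i = 1 := by omega
    subst hi; ext x; simp only [Finset.mem_insert, Finset.mem_singleton]; try omega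

lemma IsAutC3.mul' {f g : Equiv.Perm ℕ} (hf : IsAutC3 m f) (hg : IsAutC3 m g) :
    IsAutC3 m (f * g) := by
  refine ⟨fun x hx => ?_, fun S => ?_⟩
  · rw [Equiv.Perm.mul_apply, hg.1 x hx, hf.1 x hx]
  · rw [hg.2 S, hf.2 (S.image g), Finset.image_image, ← Equiv.Perm.coe_mul]

lemma aut_of_fwd {π : Equiv.Perm ℕ} (hsupp : ∀ x ∉ Finset.Icc 1 m, π x = x)
    (hinv : ∀ x, π (π x) = x)
    (fwd : ∀ S, faceC3 m S → faceC3 m (S.image π)) : IsAutC3 m π := by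
  refine ⟨hsupp, fun S => ⟨fwd S, fun h => ?_⟩⟩
  have h2 := fwd _ h
  rwa [Finset.image_image, show (⇑π ∘ ⇑π) = id from funext hinv, Finset.image_id] at h2

lemma aut_rev (hm : 5 < m) : IsAutC3 m (revPerm m) := by
  apply aut_of_fwd
  · intro x hx
    rw [Finset.mem_Icc] at hx
    rw [rev_apply, if_neg hx]
  · intro x
    simp only [rev_apply]
    split_ifs <;> omega
  · intro S hS
    rcases hS with ⟨i, hi2, him, rfl⟩ | ⟨i, hi1, him, rfl⟩
    · right
      refine ⟨m - i, by omega, by omega, ?_⟩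
      rw [image_triple]
      ext x
      simp only [Finset.mem_insert, Finset.mem_singleton, rev_apply]
      split_ifs <;> omega
    · left
      refine ⟨m - i, by omega, by omega, ?_⟩
      rw [image_triple]
      ext x
      simp only [Finset.mem_insert, Finset.mem_singleton, rev_apply]
      split_ifs <;> omega

lemma aut_swap (hm : 5 < m) : IsAutC3 m (Equiv.swap 1 m) := by
  have t1 : Equiv.swap 1 m 1 = m := Equiv.swap_apply_left 1 m
  have tm : Equiv.swap 1 m m = 1 := Equiv.swap_apply_right 1 m
  apply aut_of_fwd
  · intro x hx
    rw [Finset.mem_Icc] at hx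
    exact Equiv.swap_apply_of_ne_of_ne (by omega) (by omega)
  · intro x; exact Equiv.swap_apply_self 1 m x
  · intro S hS
    rcases hS with ⟨i, hi2, him, rfl⟩ | ⟨i, hi1, him, rfl⟩
    · rcases Nat.lt_or_ge i (m - 1) with hc | hc
      · have ti : Equiv.swap 1 m i = i := Equiv.swap_apply_of_ne_of_ne (by omega) (by omega)
        have ti1 : Equiv.swap 1 m (i + 1) = i + 1 :=
          Equiv.swap_apply_of_ne_of_ne (by omega) (by omega)
        right
        exact ⟨i, by omega, by omega, by rw [image_triple, t1, ti, ti1]; ext x; simp only [Finset.mem_insert, Finset.mem_singleton]; try omega⟩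
      · have hieq : i = m - 1 := by omega
        subst hieq
        have ti : Equiv.swap 1 m (m - 1) = m - 1 :=
          Equiv.swap_apply_of_ne_of_ne (by omega) (by omega)
        have ti1 : Equiv.swap 1 m (m - 1 + 1) = 1 := by
          rw [show m - 1 + 1 = m by omega]; exact tm
        left
        exact ⟨m - 1, by omega, by omega, by rw [image_triple, t1, ti, ti1]; ext x; simp only [Finset.mem_insert, Finset.mem_singleton]; try omega⟩
    · rcases Nat.lt_or_ge 1 i with hc | hc
      · have ti : Equiv.swap 1 m i = i := Equiv.swap_apply_of_ne_of_ne (by omega) (by omega)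
        have ti1 : Equiv.swap 1 m (i + 1) = i + 1 :=
          Equiv.swap_apply_of_ne_of_ne (by omega) (by omega)
        left
        exact ⟨i, by omega, by omega, by rw [image_triple, ti, ti1, tm]; ext x; simp only [Finset.mem_insert, Finset.mem_singleton]; try omega⟩
      · have hieq : i = 1 := by omega
        subst hieq
        have ti1 : Equiv.swap 1 m (1 + 1) = 2 :=
          Equiv.swap_apply_of_ne_of_ne (by omega) (by omega)
        right
        exact ⟨1, le_rfl, by omega, by rw [image_triple, t1, ti1, tm]; ext x; simp only [Finset.mem_insert, Finset.mem_singleton]; try omega⟩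

lemma card5 (a b c d e : ℕ) : ({a, b, c, d, e} : Finset ℕ).card ≤ 5 := by
  refine le_trans (Finset.card_insert_le _ _) (Nat.succ_le_succ ?_)
  refine le_trans (Finset.card_insert_le _ _) (Nat.succ_le_succ ?_)
  refine le_trans (Finset.card_insert_le _ _) (Nat.succ_le_succ ?_)
  refine le_trans (Finset.card_insert_le _ _) (Nat.succ_le_succ ?_)
  simp

lemma cardW (hm : 5 < m) : ({1, 2, 3, 4, 5, m} : Finset ℕ).card = 6 := by
  rw [Finset.card_insert_of_notMem (by simp; omega),
      Finset.card_insert_of_notMem (by simp; omega),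
      Finset.card_insert_of_notMem (by simp; omega),
      Finset.card_insert_of_notMem (by simp; omega),
      Finset.card_insert_of_notMem (by simp; omega),
      Finset.card_singleton]

lemma deg_big (hm : 5 < m) {π : Equiv.Perm ℕ} (h : IsAutC3 m π) {u : ℕ}
    (hf : ∀ y ∈ ({1, 2, 3, 4, 5, m} : Finset ℕ), ∃ S, faceC3 m S ∧ u ∈ S ∧ y ∈ S) :
    π u = 1 ∨ π u = m := by
  by_contra hc
  push_neg at hc
  have hu : 1 ≤ u ∧ u ≤ m := by
    obtain ⟨S, hS, huS, _⟩ := hf 1 (by simp)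
    exact face_range hS huS
  have hv : 1 ≤ π u ∧ π u ≤ m := by
    by_contra hg
    have h' : π (π u) = π u := h.1 (π u) (by rw [Finset.mem_Icc]; exact hg)
    have := π.injective h'
    omega
  have hsub : ({1, 2, 3, 4, 5, m} : Finset ℕ).image π ⊆ {1, π u - 1, π u, π u + 1, m} := by
    intro x hx
    rw [Finset.mem_image] at hx
    obtain ⟨y, hy, rfl⟩ := hx
    obtain ⟨S, hS, huS, hyS⟩ := hf y hy
    exact face_sub hm ((h.2 S).mp hS) (Finset.mem_image_of_mem _ huS) (by omega) (by omega)
      (Finset.mem_image_of_mem _ hyS)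
  have hcard := Finset.card_le_card hsub
  rw [Finset.card_image_of_injective _ π.injective, cardW hm] at hcard
  have h5 := card5 1 (π u - 1) (π u) (π u + 1) m
  omega

lemma rigid (hm : 5 < m) {π : Equiv.Perm ℕ} (h : IsAutC3 m π)
    (h1 : π 1 = 1) (h2 : π 2 = 2) (hmm : π m = m) : π = 1 := by
  have inj := π.injective
  have main : ∀ k, 3 ≤ k → k ≤ m - 1 → π k = k := by
    intro k
    induction k using Nat.strong_induction_on with
    | _ k ih =>
      intro hk3 hkm
      have hprev : π (k - 1) = k - 1 := by
        rcases Nat.lt_or_ge k 4 with hc | hc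
        · have hk : k = 3 := by omega
          subst hk; simpa using h2
        · exact ih (k - 1) (by omega) (by omega) (by omega)
      have hprev2 : π (k - 2) = k - 2 := by
        rcases Nat.lt_or_ge k 5 with hc | hc
        · have hk : k = 3 ∨ k = 4 := by omega
          rcases hk with rfl | rfl
          · simpa using h1
          · simpa using h2
        · exact ih (k - 2) (by omega) (by omega) (by omega)
      have hface : faceC3 m ({1, k - 1, k} : Finset ℕ) :=
        Or.inl ⟨k - 1, by omega, by omega, by ext x; simp only [Finset.mem_insert, Finset.mem_singleton]; try omega⟩
      have himg : faceC3 m ({1, k - 1, π k} : Finset ℕ) := by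
        have h' := (h.2 _).mp hface
        rwa [image_triple, h1, hprev] at h'
      have hmemπ : π k ∈ ({1, k - 1, π k} : Finset ℕ) := by simp
      rcases face_F12 (j := k - 1) hm himg (by simp) (by simp) (by omega) (by omega)
        with hE | hE | hE
      · rw [hE] at hmemπ
        simp only [Finset.mem_insert, Finset.mem_singleton] at hmemπ
        rcases hmemπ with e | e | e
        · exact absurd (inj (e.trans h1.symm)) (by omega)
        · have e2 : π k = k - 2 := by omega
          exact absurd (inj (e2.trans hprev2.symm)) (by omega)
        · exact absurd (inj (e.trans hprev.symm)) (by omega)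
      · rw [hE] at hmemπ
        simp only [Finset.mem_insert, Finset.mem_singleton] at hmemπ
        rcases hmemπ with e | e | e
        · exact absurd (inj (e.trans h1.symm)) (by omega)
        · exact absurd (inj (e.trans hprev.symm)) (by omega)
        · omega
      · rw [hE] at hmemπ
        simp only [Finset.mem_insert, Finset.mem_singleton] at hmemπ
        rcases hmemπ with e | e | e
        · exact absurd (inj (e.trans h1.symm)) (by omega)
        · exact absurd (inj (e.trans h2.symm)) (by omega)
        · exact absurd (inj (e.trans hmm.symm)) (by omega)
  refine Equiv.ext fun x => ?_
  rw [Equiv.Perm.one_apply]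
  by_cases hx : 1 ≤ x ∧ x ≤ m
  · rcases Nat.lt_or_ge x 3 with hc | hc
    · have : x = 1 ∨ x = 2 := by omega
      rcases this with rfl | rfl
      · exact h1
      · exact h2
    · rcases Nat.eq_or_lt_of_le hx.2 with he | he
      · rw [he]; exact hmm
      · exact main x hc (by omega)
  · exact h.1 x (by rw [Finset.mem_Icc]; exact hx)

lemma core (hm : 5 < m) {π : Equiv.Perm ℕ} (h : IsAutC3 m π)
    (h1 : π 1 = 1) (hmm : π m = m) :
    π ∈ Subgroup.closure ({revPerm m, Equiv.swap 1 m} : Set (Equiv.Perm ℕ)) := by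
  have inj := π.injective
  have hσ : revPerm m ∈ Subgroup.closure ({revPerm m, Equiv.swap 1 m} : Set (Equiv.Perm ℕ)) :=
    Subgroup.subset_closure (Set.mem_insert _ _)
  have hτ : Equiv.swap 1 m ∈ Subgroup.closure ({revPerm m, Equiv.swap 1 m} : Set (Equiv.Perm ℕ)) :=
    Subgroup.subset_closure (Set.mem_insert_of_mem _ rfl)
  have hface1 : faceC3 m ({1, 2, m} : Finset ℕ) :=
    Or.inr ⟨1, le_rfl, by omega, by ext x; simp only [Finset.mem_insert, Finset.mem_singleton]; try omega⟩
  have hface2 : faceC3 m ({1, m - 1, m} : Finset ℕ) :=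
    Or.inl ⟨m - 1, by omega, by omega, by ext x; simp only [Finset.mem_insert, Finset.mem_singleton]; try omega⟩
  have himg1 : faceC3 m ({1, π 2, m} : Finset ℕ) := by
    have h' := (h.2 _).mp hface1
    rwa [image_triple, h1, hmm] at h'
  have himg2 : faceC3 m ({1, π (m - 1), m} : Finset ℕ) := by
    have h' := (h.2 _).mp hface2
    rwa [image_triple, h1, hmm] at h'
  have hc1 : π 2 = 2 ∨ π 2 = m - 1 := by
    rcases face_F3 hm himg1 (by simp) (by simp) with hE | hE
    · have hmem : π 2 ∈ ({1, m - 1, m} : Finset ℕ) := hE ▸ (by simp)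
      simp only [Finset.mem_insert, Finset.mem_singleton] at hmem
      rcases hmem with e | e | e
      · exact absurd (inj (e.trans h1.symm)) (by omega)
      · exact Or.inr e
      · exact absurd (inj (e.trans hmm.symm)) (by omega)
    · have hmem : π 2 ∈ ({1, 2, m} : Finset ℕ) := hE ▸ (by simp)
      simp only [Finset.mem_insert, Finset.mem_singleton] at hmem
      rcases hmem with e | e | e
      · exact absurd (inj (e.trans h1.symm)) (by omega)
      · exact Or.inl e
      · exact absurd (inj (e.trans hmm.symm)) (by omega)
  have hc2 : π (m - 1) = 2 ∨ π (m - 1) = m - 1 := by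
    rcases face_F3 hm himg2 (by simp) (by simp) with hE | hE
    · have hmem : π (m - 1) ∈ ({1, m - 1, m} : Finset ℕ) := hE ▸ (by simp)
      simp only [Finset.mem_insert, Finset.mem_singleton] at hmem
      rcases hmem with e | e | e
      · exact absurd (inj (e.trans h1.symm)) (by omega)
      · exact Or.inr e
      · exact absurd (inj (e.trans hmm.symm)) (by omega)
    · have hmem : π (m - 1) ∈ ({1, 2, m} : Finset ℕ) := hE ▸ (by simp)
      simp only [Finset.mem_insert, Finset.mem_singleton] at hmem
      rcases hmem with e | e | e
      · exact absurd (inj (e.trans h1.symm)) (by omega)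
      · exact Or.inl e
      · exact absurd (inj (e.trans hmm.symm)) (by omega)
  rcases hc1 with h2v | h2v
  · have hm1 : π (m - 1) = m - 1 := by
      rcases hc2 with e | e
      · exact absurd (inj (e.trans h2v.symm)) (by omega)
      · exact e
    rw [rigid hm h h1 h2v hmm]
    exact Subgroup.one_mem _
  · have hm1 : π (m - 1) = 2 := by
      rcases hc2 with e | e
      · exact e
      · exact absurd (inj (e.trans h2v.symm)) (by omega)
    have hρ1 : (revPerm m * Equiv.swap 1 m) 1 = 1 := by
      rw [Equiv.Perm.mul_apply, Equiv.swap_apply_left, rev_val (by omega) le_rfl]; omega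
    have hρm1 : (revPerm m * Equiv.swap 1 m) (m - 1) = 2 := by
      rw [Equiv.Perm.mul_apply, Equiv.swap_apply_of_ne_of_ne (by omega) (by omega),
        rev_val (by omega) (by omega)]
      omega
    have hρm : (revPerm m * Equiv.swap 1 m) m = m := by
      rw [Equiv.Perm.mul_apply, Equiv.swap_apply_right, rev_val le_rfl (by omega)]; omega
    have hψ : IsAutC3 m (revPerm m * Equiv.swap 1 m * π) :=
      ((aut_rev hm).mul' (aut_swap hm)).mul' h
    have hψ1 : (revPerm m * Equiv.swap 1 m * π) 1 = 1 := by
      rw [Equiv.Perm.mul_apply, h1]; exact hρ1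
    have hψ2 : (revPerm m * Equiv.swap 1 m * π) 2 = 2 := by
      rw [Equiv.Perm.mul_apply, h2v]; exact hρm1
    have hψm : (revPerm m * Equiv.swap 1 m * π) m = m := by
      rw [Equiv.Perm.mul_apply, hmm]; exact hρm
    have hone := rigid hm hψ hψ1 hψ2 hψm
    have hπeq : π = (revPerm m * Equiv.swap 1 m)⁻¹ := by
      have h' := congrArg (fun g => (revPerm m * Equiv.swap 1 m)⁻¹ * g) hone
      simpa [← mul_assoc] using h'
    rw [hπeq]
    exact Subgroup.inv_mem _ (Subgroup.mul_mem _ hσ hτ)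

end Aux

/-- For `m > 5` the automorphism group of `K_{C³(m)*}` is generated by the reversal `σ`
and the transposition `τ = (1 m)`; moreover every automorphism fixing `1`, `2`, `m-1`
and `m` is the identity. -/
theorem stmt_11 (m : ℕ) (hm : 5 < m) :
    IsAutC3 m (revPerm m) ∧ IsAutC3 m (Equiv.swap 1 m) ∧
    (∀ π : Equiv.Perm ℕ, IsAutC3 m π →
      π ∈ Subgroup.closure ({revPerm m, Equiv.swap 1 m} : Set (Equiv.Perm ℕ))) ∧
    (∀ π : Equiv.Perm ℕ, IsAutC3 m π →
      π 1 = 1 → π 2 = 2 → π (m - 1) = m - 1 → π m = m → π = 1) := by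
  refine ⟨aut_rev hm, aut_swap hm, ?_, fun π hπ h1 h2 _ h4 => rigid hm hπ h1 h2 h4⟩
  intro π hπ
  have inj := π.injective
  have hu1 : π 1 = 1 ∨ π 1 = m := by
    apply deg_big hm hπ
    intro y hy
    simp only [Finset.mem_insert, Finset.mem_singleton] at hy
    rcases hy with rfl | rfl | rfl | rfl | rfl | hy6
    · exact ⟨{1, 2, 3}, Or.inl ⟨2, by omega, by omega, by ext x; simp only [Finset.mem_insert, Finset.mem_singleton]; try omega⟩, by simp, by simp⟩
    · exact ⟨{1, 2, 3}, Or.inl ⟨2, by omega, by omega, by ext x; simp only [Finset.mem_insert, Finset.mem_singleton]; try omega⟩, by simp, by simp⟩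
    · exact ⟨{1, 2, 3}, Or.inl ⟨2, by omega, by omega, by ext x; simp only [Finset.mem_insert, Finset.mem_singleton]; try omega⟩, by simp, by simp⟩
    · exact ⟨{1, 4, 5}, Or.inl ⟨4, by omega, by omega, by ext x; simp only [Finset.mem_insert, Finset.mem_singleton]; try omega⟩, by simp, by simp⟩
    · exact ⟨{1, 4, 5}, Or.inl ⟨4, by omega, by omega, by ext x; simp only [Finset.mem_insert, Finset.mem_singleton]; try omega⟩, by simp, by simp⟩
    · exact ⟨{1, 2, m}, Or.inr ⟨1, le_rfl, by omega, by ext x; simp only [Finset.mem_insert, Finset.mem_singleton]; try omega⟩, by simp, by simp [hy6]⟩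
  have hum : π m = 1 ∨ π m = m := by
    apply deg_big hm hπ
    intro y hy
    simp only [Finset.mem_insert, Finset.mem_singleton] at hy
    rcases hy with rfl | rfl | rfl | rfl | rfl | hy6
    · exact ⟨{1, 2, m}, Or.inr ⟨1, le_rfl, by omega, by ext x; simp only [Finset.mem_insert, Finset.mem_singleton]; try omega⟩, by simp, by simp⟩
    · exact ⟨{1, 2, m}, Or.inr ⟨1, le_rfl, by omega, by ext x; simp only [Finset.mem_insert, Finset.mem_singleton]; try omega⟩, by simp, by simp⟩
    · exact ⟨{3, 4, m}, Or.inr ⟨3, by omega, by omega, by ext x; simp only [Finset.mem_insert, Finset.mem_singleton]; try omega⟩, by simp, by simp⟩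
    · exact ⟨{3, 4, m}, Or.inr ⟨3, by omega, by omega, by ext x; simp only [Finset.mem_insert, Finset.mem_singleton]; try omega⟩, by simp, by simp⟩
    · exact ⟨{4, 5, m}, Or.inr ⟨4, by omega, by omega, by ext x; simp only [Finset.mem_insert, Finset.mem_singleton]; try omega⟩, by simp, by simp⟩
    · exact ⟨{1, 2, m}, Or.inr ⟨1, le_rfl, by omega, by ext x; simp only [Finset.mem_insert, Finset.mem_singleton]; try omega⟩, by simp, by simp [hy6]⟩
  rcases hu1 with e1 | e1
  · have em : π m = m := by
      rcases hum with e | e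
      · exact absurd (inj (e.trans e1.symm)) (by omega)
      · exact e
    exact core hm hπ e1 em
  · have em : π m = 1 := by
      rcases hum with e | e
      · exact e
      · exact absurd (inj (e1.trans e.symm)) (by omega)
    have hψ1 : (Equiv.swap 1 m * π) 1 = 1 := by
      rw [Equiv.Perm.mul_apply, e1]; exact Equiv.swap_apply_right 1 m
    have hψm : (Equiv.swap 1 m * π) m = m := by
      rw [Equiv.Perm.mul_apply, em]; exact Equiv.swap_apply_left 1 m
    have hcore := core hm ((aut_swap hm).mul' hπ) hψ1 hψm
    have hπeq : π = (Equiv.swap 1 m)⁻¹ * (Equiv.swap 1 m * π) := by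
      rw [inv_mul_cancel_left]
    rw [hπeq]
    exact Subgroup.mul_mem _
      (Subgroup.inv_mem _ (Subgroup.subset_closure (Set.mem_insert_of_mem _ rfl))) hcore
end

section
/- Let A_d = ℤ[X,Y,Z]/(X(X+Y+dZ), Y(X+Y+dZ), Y(X+Z), Z²(X+Z), Z²X) graded with X, Y, Z in degree 2, for integers d, d' ≥ 3. Then A_d and A_{d'} are isomorphic as graded rings if and only if d = d'. -/
open MvPolynomial

/-- The defining ideal of `A_d = ℤ[X,Y,Z]/(X(X+Y+dZ), Y(X+Y+dZ), Y(X+Z), Z²(X+Z), Z²X)`,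
with `X = X 0`, `Y = X 1`, `Z = X 2`. -/
noncomputable def idealAd (d : ℤ) : Ideal (MvPolynomial (Fin 3) ℤ) :=
  Ideal.span {X 0 * (X 0 + X 1 + C d * X 2), X 1 * (X 0 + X 1 + C d * X 2),
    X 1 * (X 0 + X 2), X 2 ^ 2 * (X 0 + X 2), X 2 ^ 2 * X 0}

/-!
The three quadrics `q₀, q₁, q₂` of the ideal span a net `l ↦ ∑ lₖ qₖ` of ternary quadratic
forms; the determinant of its Hessian is the cubic `2 l₀ l₂ (d l₀ + d(d-1) l₁ + (d-1) l₂)`, a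
product of three linear forms whose determinant is `-d(d-1)`. A graded isomorphism
`A_d ≅ A_{d'}` is a unimodular substitution `m` carrying the net of `d` into the net of `d'`
through an integer matrix `T`, so the cubic of `d'` composed with `T` is `det(m)²` times the
cubic of `d`, i.e. equal to it. By unique factorisation of the cubic (checked on two lines),
`det(T) · d'(d'-1) = ± d(d-1)`. Hence `d'(d'-1) ∣ d(d-1)`, and by symmetry the two are equal.
-/

open Matrix

namespace MvPolynomial

section CommSemiring

variable {σ R : Type*} [CommSemiring R]

lemma homogeneousComponent_mul_of_isHomogeneous {g : MvPolynomial σ R} {k : ℕ}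
    (hg : g.IsHomogeneous k) (n : ℕ) (r : MvPolynomial σ R) :
    homogeneousComponent n (r * g) =
      if k ≤ n then homogeneousComponent (n - k) r * g else 0 := by
  induction r using MvPolynomial.induction_on' with
  | monomial u a =>
    have hu : (monomial u a).IsHomogeneous u.degree := isHomogeneous_monomial a rfl
    rw [homogeneousComponent_of_mem (hu.mul hg), homogeneousComponent_of_mem hu]
    split_ifs <;> first | rfl | omega
  | add p q hp hq => simp only [add_mul, map_add, hp, hq]; split_ifs <;> simp

section Substitution

variable {F : Type*} [FunLike F (MvPolynomial σ R) (MvPolynomial σ R)]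
  [AlgHomClass F R (MvPolynomial σ R) (MvPolynomial σ R)]

lemma IsHomogeneous.map_of_isHomogeneous_X {φ : F} (hφ : ∀ i, (φ (X i)).IsHomogeneous 1)
    {p : MvPolynomial σ R} {n : ℕ} (hp : p.IsHomogeneous n) : (φ p).IsHomogeneous n := by
  have h := hp.aeval (AlgHomClass.toAlgHom φ ∘ X) hφ
  rwa [one_mul, ← aeval_unique] at h

lemma homogeneousComponent_map_of_isHomogeneous_X {φ : F}
    (hφ : ∀ i, (φ (X i)).IsHomogeneous 1) (n : ℕ) (p : MvPolynomial σ R) :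
    homogeneousComponent n (φ p) = φ (homogeneousComponent n p) := by
  conv_lhs => rw [← sum_homogeneousComponent p, map_sum, map_sum]
  simp_rw [homogeneousComponent_of_mem
    ((homogeneousComponent_isHomogeneous _ p).map_of_isHomogeneous_X hφ), Finset.sum_ite_eq]
  split_ifs with hn
  · rfl
  · rw [homogeneousComponent_eq_zero _ _ (by simpa [Nat.lt_succ_iff] using hn), map_zero]

lemma isHomogeneous_symm_X {ψ : MvPolynomial σ R ≃ₐ[R] MvPolynomial σ R}
    (hψ : ∀ i, (ψ (X i)).IsHomogeneous 1) (i : σ) : (ψ.symm (X i)).IsHomogeneous 1 := by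
  have h : ψ (homogeneousComponent 1 (ψ.symm (X i))) = ψ (ψ.symm (X i)) := by
    rw [← homogeneousComponent_map_of_isHomogeneous_X hψ, ψ.apply_symm_apply,
      homogeneousComponent_eq_self (isHomogeneous_X R i)]
  rw [← ψ.injective h]
  exact homogeneousComponent_isHomogeneous 1 _

variable [Fintype σ]

lemma isHomogeneous_one_iff_exists_eq_sum_smul_X {p : MvPolynomial σ R} :
    p.IsHomogeneous 1 ↔ ∃ c : σ → R, p = ∑ j, c j • X j := by
  rw [← mem_homogeneousSubmodule, homogeneousSubmodule_one_eq_span_X,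
    Submodule.mem_span_range_iff_exists_fun]
  exact exists_congr fun c => eq_comm

lemma eval_map_of_X_eq_sum_smul_X {φ : F} {m : Matrix σ σ R}
    (hφ : ∀ i, φ (X i) = ∑ j, m i j • X j) (v : σ → R) (p : MvPolynomial σ R) :
    eval v (φ p) = eval (m *ᵥ v) p := by
  change ((eval v).comp (RingHomClass.toRingHom φ)) p = eval (m *ᵥ v) p
  congr 1
  refine ringHom_ext (fun a => ?_) (fun i => ?_)
  · simpa using congrArg (eval v) (AlgHomClass.commutes φ a)
  · simp [hφ, mulVec, dotProduct]

lemma exists_symm_X_eq_sum_smul_X {ψ : MvPolynomial σ R ≃ₐ[R] MvPolynomial σ R}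
    {m : Matrix σ σ R} (hψ : ∀ i, ψ (X i) = ∑ j, m i j • X j) :
    ∃ n : Matrix σ σ R, ∀ i, ψ.symm (X i) = ∑ j, n i j • X j := by
  have hψ₁ i := isHomogeneous_one_iff_exists_eq_sum_smul_X.2 ⟨m i, hψ i⟩
  choose n hn using fun i => isHomogeneous_one_iff_exists_eq_sum_smul_X.1
    (isHomogeneous_symm_X hψ₁ i)
  exact ⟨n, hn⟩

end Substitution

end CommSemiring

lemma isUnit_det_of_X_eq_sum_smul_X {σ R : Type*} [Fintype σ] [DecidableEq σ] [CommRing R]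
    {ψ : MvPolynomial σ R ≃ₐ[R] MvPolynomial σ R}
    {m : Matrix σ σ R} (hψ : ∀ i, ψ (X i) = ∑ j, m i j • X j) : IsUnit m.det := by
  obtain ⟨n, hn⟩ := exists_symm_X_eq_sum_smul_X hψ
  refine isUnit_det_of_left_inverse (B := n) (ext_iff_mulVec.2 fun v => ?_)
  ext i
  calc ((n * m) *ᵥ v) i = eval (n *ᵥ (m *ᵥ v)) (X i) := by simp [mulVec_mulVec]
    _ = eval v (ψ (ψ.symm (X i))) := by
      rw [eval_map_of_X_eq_sum_smul_X hψ, eval_map_of_X_eq_sum_smul_X hn]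
    _ = ((1 : Matrix σ σ R) *ᵥ v) i := by simp

end MvPolynomial

namespace Matrix

variable {n R : Type*} [Fintype n]

lemma IsSymm.ext_of_dotProduct_mulVec [DecidableEq n] [CommRing R] [IsAddTorsionFree R]
    {A B : Matrix n n R} (hA : A.IsSymm) (hB : B.IsSymm)
    (h : ∀ v, v ⬝ᵥ A *ᵥ v = v ⬝ᵥ B *ᵥ v) : A = B := by
  have hdiag i : A i i = B i i := by simpa using h (Pi.single i 1)
  ext i j
  have hij := h (Pi.single i 1 + Pi.single j 1)
  simp only [mulVec_add, dotProduct_add, add_dotProduct, mulVec_single_one,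
    single_one_dotProduct, col_apply, hdiag] at hij
  rw [← nsmul_right_inj (two_ne_zero : (2 : ℕ) ≠ 0), two_nsmul, two_nsmul]
  linear_combination hij - hA.apply i j + hB.apply i j

lemma IsSymm.transpose_mul_mul [CommSemiring R] {A : Matrix n n R} (hA : A.IsSymm)
    (B : Matrix n n R) : (Bᵀ * A * B).IsSymm := by
  simp [IsSymm, transpose_mul, hA.eq, Matrix.mul_assoc]

lemma dotProduct_transpose_mul_mul_mulVec [CommSemiring R] (A B : Matrix n n R) (v : n → R) :
    v ⬝ᵥ (Bᵀ * A * B) *ᵥ v = (B *ᵥ v) ⬝ᵥ A *ᵥ (B *ᵥ v) := by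
  rw [← mulVec_mulVec, ← mulVec_mulVec, dotProduct_mulVec, vecMul_transpose]

end Matrix

lemma exists_eq_zero_of_forall_prod_eq_zero {ι R : Type*} [Fintype ι] [CommRing R] [IsDomain R]
    [Infinite R] {a b : ι → R} (h : ∀ t, ∏ i, (a i * t + b i) = 0) :
    ∃ i, a i = 0 ∧ b i = 0 := by
  have hP : ∏ i, (Polynomial.C (a i) * Polynomial.X + Polynomial.C (b i)) = 0 :=
    Polynomial.funext fun t => by simpa [Polynomial.eval_prod] using h t
  obtain ⟨i, -, hi⟩ := Finset.prod_eq_zero_iff.1 hP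
  exact ⟨i, by simpa using congrArg (Polynomial.coeff · 1) hi,
    by simpa using congrArg (Polynomial.coeff · 0) hi⟩

lemma det_sq_eq_of_forall_prod_mulVec {R : Type*} [CommRing R] [IsDomain R] [Infinite R]
    (P : Matrix (Fin 3) (Fin 3) R) (k : Fin 3 → R) (s : R)
    (H : ∀ l, ∏ i, (P *ᵥ l) i = s * (l 0 * l 2 * (k ⬝ᵥ l))) :
    P.det ^ 2 = (s * k 1) ^ 2 := by
  obtain ⟨i, hi₁, hi₂⟩ := exists_eq_zero_of_forall_prod_eq_zero (a := fun i => P i 1)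
    (b := fun i => P i 2) fun t => by
      simpa [mulVec, dotProduct, Fin.sum_univ_three] using H ![0, t, 1]
  obtain ⟨j, hj₀, hj₁⟩ := exists_eq_zero_of_forall_prod_eq_zero (a := fun i => P i 0)
    (b := fun i => P i 1) fun t => by
      simpa [mulVec, dotProduct, Fin.sum_univ_three] using H ![t, 1, 0]
  -- Row `i` of `P` is a multiple of `e₀` and row `j` one of `e₂`; in each case both sides
  -- equal the square of the product of these multiples with the middle entry of the third row.
  have key : P.det ^ 2 = (∏ i, (P *ᵥ ![1, 1, 1]) i - ∏ i, (P *ᵥ ![1, 0, 1]) i) ^ 2 := by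
    simp only [det_fin_three, Fin.prod_univ_three, mulVec, dotProduct, Fin.sum_univ_three]
    fin_cases i <;> fin_cases j <;> simp_all <;> ring
  rw [key, H, H]
  simp [dotProduct, Fin.sum_univ_three]
  ring

noncomputable def quadGen (d : ℤ) : Fin 3 → MvPolynomial (Fin 3) ℤ :=
  ![X 0 * (X 0 + X 1 + C d * X 2), X 1 * (X 0 + X 1 + C d * X 2), X 1 * (X 0 + X 2)]

lemma quadGen_mem_idealAd (d : ℤ) (k : Fin 3) : quadGen d k ∈ idealAd d := by
  apply Ideal.subset_span
  fin_cases k <;> simp [quadGen]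

lemma isHomogeneous_quadGen (d : ℤ) (k : Fin 3) : (quadGen d k).IsHomogeneous 2 := by
  have hX := isHomogeneous_X ℤ (σ := Fin 3)
  have hlin : (X 0 + X 1 + C d * X 2 : MvPolynomial (Fin 3) ℤ).IsHomogeneous 1 :=
    ((hX 0).add (hX 1)).add ((hX 2).C_mul d)
  fin_cases k
  exacts [(hX 0).mul hlin, (hX 1).mul hlin, (hX 1).mul ((hX 0).add (hX 2))]

lemma exists_homogeneousComponent_two_eq_sum_smul_quadGen {d : ℤ} {f : MvPolynomial (Fin 3) ℤ}
    (hf : f ∈ idealAd d) :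
    ∃ t : Fin 3 → ℤ, homogeneousComponent 2 f = ∑ k, t k • quadGen d k := by
  have hX := isHomogeneous_X ℤ (σ := Fin 3)
  have hcub₁ : (X 2 ^ 2 * (X 0 + X 2) : MvPolynomial (Fin 3) ℤ).IsHomogeneous 3 :=
    ((hX 2).pow 2).mul ((hX 0).add (hX 2))
  have hcub₂ : (X 2 ^ 2 * X 0 : MvPolynomial (Fin 3) ℤ).IsHomogeneous 3 :=
    ((hX 2).pow 2).mul (hX 0)
  change f ∈ Ideal.span {quadGen d 0, quadGen d 1, quadGen d 2, _, _} at hf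
  simp only [Ideal.mem_span_insert, Ideal.mem_span_singleton'] at hf
  obtain ⟨r₀, _, ⟨r₁, _, ⟨r₂, _, ⟨r₃, _, ⟨r₄, rfl⟩, rfl⟩, rfl⟩, rfl⟩, rfl⟩ := hf
  refine ⟨![coeff 0 r₀, coeff 0 r₁, coeff 0 r₂], ?_⟩
  simp only [map_add, homogeneousComponent_mul_of_isHomogeneous (isHomogeneous_quadGen d _),
    homogeneousComponent_mul_of_isHomogeneous hcub₁,
    homogeneousComponent_mul_of_isHomogeneous hcub₂]
  simp [Fin.sum_univ_three, smul_eq_C_mul, add_assoc]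

/-- The Hessian matrix of the quadratic form `∑ k, l k • quadGen d k`. -/
def quadGenMatrix (d : ℤ) (l : Fin 3 → ℤ) : Matrix (Fin 3) (Fin 3) ℤ :=
  !![2 * l 0, l 0 + l 1 + l 2, d * l 0;
     l 0 + l 1 + l 2, 2 * l 1, d * l 1 + l 2;
     d * l 0, d * l 1 + l 2, 0]

lemma isSymm_quadGenMatrix (d : ℤ) (l : Fin 3 → ℤ) : (quadGenMatrix d l).IsSymm :=
  IsSymm.ext fun i j => by fin_cases i <;> fin_cases j <;> rfl

lemma dotProduct_quadGenMatrix_mulVec (d : ℤ) (l v : Fin 3 → ℤ) :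
    v ⬝ᵥ quadGenMatrix d l *ᵥ v = 2 * eval v (∑ k, l k • quadGen d k) := by
  simp [quadGenMatrix, quadGen, mulVec, dotProduct, Fin.sum_univ_three]
  ring

lemma det_quadGenMatrix (d : ℤ) (l : Fin 3 → ℤ) :
    (quadGenMatrix d l).det = 2 * (l 0 * l 2 * (![d, d * (d - 1), d - 1] ⬝ᵥ l)) := by
  simp [quadGenMatrix, det_fin_three, dotProduct, Fin.sum_univ_three]
  ring

lemma exists_transpose_mul_quadGenMatrix_mul_eq {F : Type*}
    [FunLike F (MvPolynomial (Fin 3) ℤ) (MvPolynomial (Fin 3) ℤ)]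
    [AlgHomClass F ℤ (MvPolynomial (Fin 3) ℤ) (MvPolynomial (Fin 3) ℤ)]
    {d d' : ℤ} {φ : F} {m : Matrix (Fin 3) (Fin 3) ℤ}
    (hφ : ∀ i, φ (X i) = ∑ j, m i j • X j) (hmap : ∀ f ∈ idealAd d, φ f ∈ idealAd d') :
    ∃ T : Matrix (Fin 3) (Fin 3) ℤ,
      ∀ l, mᵀ * quadGenMatrix d l * m = quadGenMatrix d' (l ᵥ* T) := by
  have hφ₁ i : (φ (X i)).IsHomogeneous 1 :=
    isHomogeneous_one_iff_exists_eq_sum_smul_X.2 ⟨m i, hφ i⟩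
  have hT k : ∃ t : Fin 3 → ℤ, φ (quadGen d k) = ∑ j, t j • quadGen d' j := by
    obtain ⟨t, ht⟩ :=
      exists_homogeneousComponent_two_eq_sum_smul_quadGen (hmap _ (quadGen_mem_idealAd d k))
    rw [homogeneousComponent_eq_self ((isHomogeneous_quadGen d k).map_of_isHomogeneous_X hφ₁)]
      at ht
    exact ⟨t, ht⟩
  choose T hT using hT
  refine ⟨T, fun l => ((isSymm_quadGenMatrix d l).transpose_mul_mul m).ext_of_dotProduct_mulVec
    (isSymm_quadGenMatrix d' _) fun v => ?_⟩
  rw [dotProduct_transpose_mul_mul_mulVec, dotProduct_quadGenMatrix_mulVec,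
    dotProduct_quadGenMatrix_mulVec, ← eval_map_of_X_eq_sum_smul_X hφ]
  simp [hT, vecMul, dotProduct, Fin.sum_univ_three]
  ring

lemma dvd_of_forall_map_mem_idealAd {d d' : ℤ}
    {ψ : MvPolynomial (Fin 3) ℤ ≃ₐ[ℤ] MvPolynomial (Fin 3) ℤ} {m : Matrix (Fin 3) (Fin 3) ℤ}
    (hψ : ∀ i, ψ (X i) = ∑ j, m i j • X j) (hmap : ∀ f ∈ idealAd d, ψ f ∈ idealAd d') :
    d' * (d' - 1) ∣ d * (d - 1) := by
  obtain ⟨T, hT⟩ := exists_transpose_mul_quadGenMatrix_mul_eq hψ hmap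
  have hm : m.det ^ 2 = 1 := Int.isUnit_sq (isUnit_det_of_X_eq_sum_smul_X hψ)
  -- the rows of `P` are the linear factors of the Hessian cubic of `d'`, composed with `T`
  let P : Matrix (Fin 3) (Fin 3) ℤ :=
    of ![fun i => T i 0, fun i => T i 2, T *ᵥ ![d', d' * (d' - 1), d' - 1]]
  have hP l : ∏ i, (P *ᵥ l) i = 1 * (l 0 * l 2 * (![d, d * (d - 1), d - 1] ⬝ᵥ l)) := by
    have h := congrArg det (hT l)
    rw [det_mul, det_mul, det_transpose, det_quadGenMatrix, det_quadGenMatrix] at h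
    have hprod : ∏ i, (P *ᵥ l) i =
        (l ᵥ* T) 0 * (l ᵥ* T) 2 * (![d', d' * (d' - 1), d' - 1] ⬝ᵥ (l ᵥ* T)) := by
      simp [P, vecMul, mulVec, dotProduct, Fin.sum_univ_three, Fin.prod_univ_three]
      ring
    rw [hprod]
    refine mul_left_cancel₀ two_ne_zero ?_
    linear_combination -h + 2 * (l 0 * l 2 * (![d, d * (d - 1), d - 1] ⬝ᵥ l)) * hm
  have hPdet : P.det = -(T.det * (d' * (d' - 1))) := by
    simp [P, det_fin_three, mulVec, dotProduct, Fin.sum_univ_three]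
    ring
  have habs : |T.det * (d' * (d' - 1))| = |d * (d - 1)| := by
    rw [← sq_eq_sq_iff_abs_eq_abs]
    simpa [hPdet] using det_sq_eq_of_forall_prod_mulVec P _ 1 hP
  exact (dvd_mul_left _ _).trans ((abs_dvd_abs _ _).1 habs.dvd)

/-- For `d, d' ≥ 3`, the graded rings `A_d` and `A_{d'}` (generators in degree 2) are
isomorphic iff `d = d'`.  A graded ring isomorphism is an automorphism of `ℤ[X,Y,Z]`
acting `ℤ`-linearly on the span of `X, Y, Z` and carrying the ideal of `A_d` onto
the ideal of `A_{d'}`. -/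
theorem stmt_14 (d d' : ℤ) (hd : 3 ≤ d) (hd' : 3 ≤ d') :
    (∃ ψ : MvPolynomial (Fin 3) ℤ ≃ₐ[ℤ] MvPolynomial (Fin 3) ℤ,
      (∀ i : Fin 3, ∃ c : Fin 3 → ℤ, ψ (X i) = ∑ j, c j • X j) ∧
      Ideal.map ψ.toAlgHom.toRingHom (idealAd d) = idealAd d') ↔ d = d' := by
  constructor
  · rintro ⟨ψ, hlin, hmap⟩
    choose m hm using hlin
    obtain ⟨n, hn⟩ := exists_symm_X_eq_sum_smul_X hm
    have h₁ : d' * (d' - 1) ∣ d * (d - 1) :=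
      dvd_of_forall_map_mem_idealAd hm fun f hf => hmap ▸ Ideal.mem_map_of_mem _ hf
    have h₂ : d * (d - 1) ∣ d' * (d' - 1) := by
      refine dvd_of_forall_map_mem_idealAd hn fun f hf => ?_
      obtain ⟨g, hg, rfl⟩ := (Ideal.mem_map_of_equiv ψ f).1 (hmap ▸ hf)
      simpa using hg
    have h : d' * (d' - 1) = d * (d - 1) := Int.dvd_antisymm (by nlinarith) (by nlinarith) h₁ h₂
    nlinarith
  · rintro rfl
    exact ⟨AlgEquiv.refl, fun i => ⟨Pi.single i 1, by simp [Pi.single_apply]⟩, Ideal.map_id _⟩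
end

section
/- For d ≥ 3, the ring A_d = ℤ[X,Y,Z]/(X(X+Y+dZ), Y(X+Y+dZ), Y(X+Z), Z²(X+Z), Z²X) (generators in degree 2) is not isomorphic as a graded ring to the cohomology ring of any connected sum decomposable quasitoric manifold over C³(6)*: there exists no basis {w₁, w₂, w₃} of the degree-2 part A_d² such that w₁w₂ = w₁w₃ = 0 and w₁³ generates the degree-6 part A_d⁶ ≅ ℤ. -/
/-!
The quadratic generators `X(X+Y+dZ)`, `Y(X+Y+dZ)`, `Y(X+Z)` of `idealAd d` vanish at
`P = (0,0,1), (-d,0,1), (-1,1-d,1)`. For each such `P`, `q ↦ q(tP)` maps `idealAd d` into `(t³)`,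
so `w₀wᵢ = 0` for the images of linear forms `L₀, Lᵢ` forces `L₀(P) Lᵢ(P) = 0`. Wherever
`L₀(P) ≠ 0`, the coefficient matrix therefore sends `P` to `(L₀(P), 0, 0)`, and as `P₂ = 1` its
determinant is `L₀(P)` times a `2 × 2` minor. Going through the possible zeros of `L₀` among the
three points, this makes the determinant divisible by `d` or by `d - 1`, so it is not `±1`.
-/

open MvPolynomial

open Matrix

noncomputable def linearForm (v : Fin 3 → ℤ) : MvPolynomial (Fin 3) ℤ := ∑ j, v j • X j

noncomputable def evalLine (P : Fin 3 → ℤ) : MvPolynomial (Fin 3) ℤ →ₐ[ℤ] Polynomial ℤ :=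
  aeval fun i => Polynomial.C (P i) * Polynomial.X

lemma evalLine_linearForm (P v : Fin 3 → ℤ) :
    evalLine P (linearForm v) = Polynomial.C (v ⬝ᵥ P) * Polynomial.X := by
  simp [evalLine, linearForm, dotProduct, Finset.sum_mul, mul_assoc]

def QuadricsVanishAt (d : ℤ) (P : Fin 3 → ℤ) : Prop :=
  P 0 * (P 0 + P 1 + d * P 2) = 0 ∧ P 1 * (P 0 + P 1 + d * P 2) = 0 ∧ P 1 * (P 0 + P 2) = 0

lemma map_evalLine_idealAd_le {d : ℤ} {P : Fin 3 → ℤ} (hP : QuadricsVanishAt d P) :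
    (idealAd d).map (evalLine P) ≤ Ideal.span {Polynomial.X ^ 3} := by
  have cast_eq_zero {a : ℤ} (h : a = 0) : (a : Polynomial ℤ) = 0 := by simp [h]
  obtain ⟨h₁, h₂, h₃⟩ := hP
  replace h₁ := cast_eq_zero h₁
  replace h₂ := cast_eq_zero h₂
  replace h₃ := cast_eq_zero h₃
  push_cast at h₁ h₂ h₃
  rw [idealAd, Ideal.map_span, Ideal.span_le]
  rintro _ ⟨g, hg, rfl⟩
  simp only [Set.mem_insert_iff, Set.mem_singleton_iff] at hg
  rw [SetLike.mem_coe, Ideal.mem_span_singleton]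
  rcases hg with rfl | rfl | rfl | rfl | rfl <;>
    simp only [evalLine, map_mul, map_add, map_pow, aeval_X, eq_intCast, map_intCast]
  · exact ⟨0, by linear_combination Polynomial.X ^ 2 * h₁⟩
  · exact ⟨0, by linear_combination Polynomial.X ^ 2 * h₂⟩
  · exact ⟨0, by linear_combination Polynomial.X ^ 2 * h₃⟩
  · exact ⟨(P 2 : Polynomial ℤ) ^ 2 * (P 0 + P 2), by ring⟩
  · exact ⟨(P 2 : Polynomial ℤ) ^ 2 * P 0, by ring⟩

lemma coeff_two_evalLine_eq_zero {d : ℤ} {P : Fin 3 → ℤ} (hP : QuadricsVanishAt d P)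
    {q : MvPolynomial (Fin 3) ℤ} (hq : q ∈ idealAd d) : (evalLine P q).coeff 2 = 0 :=
  Polynomial.X_pow_dvd_iff.mp (Ideal.mem_span_singleton.mp
    (map_evalLine_idealAd_le hP (Ideal.mem_map_of_mem _ hq))) 2 (by norm_num)

def quadricPoint (d : ℤ) : Fin 3 → Fin 3 → ℤ := ![![0, 0, 1], ![-d, 0, 1], ![-1, 1 - d, 1]]

lemma quadricsVanishAt_quadricPoint (d : ℤ) (k : Fin 3) :
    QuadricsVanishAt d (quadricPoint d k) := by
  fin_cases k <;> simp only [QuadricsVanishAt, quadricPoint, Fin.reduceFinMk, cons_val,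
    Fin.isValue] <;> refine ⟨?_, ?_, ?_⟩ <;> ring

lemma dotProduct_mul_dotProduct_quadricPoint_eq_zero {d : ℤ} {u v : Fin 3 → ℤ}
    (h : linearForm u * linearForm v ∈ idealAd d) (k : Fin 3) :
    (u ⬝ᵥ quadricPoint d k) * (v ⬝ᵥ quadricPoint d k) = 0 := by
  have := coeff_two_evalLine_eq_zero (quadricsVanishAt_quadricPoint d k) h
  rwa [map_mul, evalLine_linearForm, evalLine_linearForm, mul_mul_mul_comm, ← Polynomial.C_mul,
    ← pow_two, Polynomial.coeff_C_mul_X_pow, if_pos rfl] at this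

lemma det_eq_mulVec_mul_of_mulVec_eq_zero {c : Matrix (Fin 3) (Fin 3) ℤ} {P : Fin 3 → ℤ}
    (hP : P 2 = 1) (h₁ : (c *ᵥ P) 1 = 0) (h₂ : (c *ᵥ P) 2 = 0) :
    c.det = (c *ᵥ P) 0 * (c 1 0 * c 2 1 - c 1 1 * c 2 0) := by
  simp only [mulVec, vec3_dotProduct] at *
  rw [det_fin_three]
  linear_combination -(c 0 0 * c 2 1 - c 0 1 * c 2 0) * h₁ + (c 0 0 * c 1 1 - c 0 1 * c 1 0) * h₂ -
    (c 0 0 * c 1 1 * c 2 2 - c 0 0 * c 1 2 * c 2 1 - c 0 1 * c 1 0 * c 2 2 + c 0 1 * c 1 2 * c 2 0 +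
      c 0 2 * c 1 0 * c 2 1 - c 0 2 * c 1 1 * c 2 0) * hP

section MulVec

variable (c : Matrix (Fin 3) (Fin 3) ℤ) (d : ℤ) (i : Fin 3)

lemma mulVec_quadricPoint_zero : (c *ᵥ quadricPoint d 0) i = c i 2 := by
  simp only [mulVec, vec3_dotProduct]
  simp [quadricPoint]

lemma mulVec_quadricPoint_one : (c *ᵥ quadricPoint d 1) i = c i 2 - d * c i 0 := by
  simp only [mulVec, vec3_dotProduct]
  simp [quadricPoint]
  ring

lemma mulVec_quadricPoint_two :
    (c *ᵥ quadricPoint d 2) i = -c i 0 + (1 - d) * c i 1 + c i 2 := by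
  simp only [mulVec, vec3_dotProduct]
  simp [quadricPoint]
  ring

end MulVec

lemma dvd_det_of_mulVec_quadricPoint {d : ℤ} (hd : d ≠ 0) {c : Matrix (Fin 3) (Fin 3) ℤ}
    (h₁ : ∀ k, (c *ᵥ quadricPoint d k) 0 * (c *ᵥ quadricPoint d k) 1 = 0)
    (h₂ : ∀ k, (c *ᵥ quadricPoint d k) 0 * (c *ᵥ quadricPoint d k) 2 = 0) :
    d ∣ c.det ∨ d - 1 ∣ c.det := by
  have rows : ∀ k, (c *ᵥ quadricPoint d k) 0 ≠ 0 →
      (c *ᵥ quadricPoint d k) 1 = 0 ∧ (c *ᵥ quadricPoint d k) 2 = 0 := fun k hk =>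
    ⟨(mul_eq_zero.mp (h₁ k)).resolve_left hk, (mul_eq_zero.mp (h₂ k)).resolve_left hk⟩
  have det_eq : ∀ k, (c *ᵥ quadricPoint d k) 0 ≠ 0 →
      c.det = (c *ᵥ quadricPoint d k) 0 * (c 1 0 * c 2 1 - c 1 1 * c 2 0) := fun k hk =>
    det_eq_mulVec_mul_of_mulVec_eq_zero (by fin_cases k <;> rfl) (rows k hk).1 (rows k hk).2
  have rows₀ := rows 0
  have rows₁ := rows 1
  have det₀ := det_eq 0
  have det₁ := det_eq 1
  have det₂ := det_eq 2
  simp only [mulVec_quadricPoint_zero, mulVec_quadricPoint_one, mulVec_quadricPoint_two]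
    at rows₀ rows₁ det₀ det₁ det₂
  set m := c 1 0 * c 2 1 - c 1 1 * c 2 0
  by_cases s₀ : c 0 2 = 0 <;> by_cases s₁ : c 0 2 - d * c 0 0 = 0
  · have ha : c 0 0 = 0 := by simpa [s₀, hd] using s₁
    by_cases s₂ : -c 0 0 + (1 - d) * c 0 1 + c 0 2 = 0
    · simp only [ha, s₀, neg_zero, zero_add, add_zero, mul_eq_zero] at s₂
      rcases s₂ with hd₁ | hb
      · exact Or.inl ⟨c.det, by linear_combination c.det * hd₁⟩
      · left
        rw [det_fin_three, ha, hb, s₀]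
        simp
    · exact Or.inr ⟨-c 0 1 * m, by rw [det₂ s₂, ha, s₀]; ring⟩
  · exact Or.inl ⟨-c 0 0 * m, by rw [det₁ s₁, s₀]; ring⟩
  · exact Or.inl ⟨c 0 0 * m, by rw [det₀ s₀, show c 0 2 = d * c 0 0 by linarith]; ring⟩
  · obtain ⟨h₁₂, h₂₂⟩ := rows₀ s₀
    obtain ⟨h₁₀, h₂₀⟩ := rows₁ s₁
    have h₁ : c 1 0 = 0 := by simpa [h₁₂, hd] using h₁₀
    have h₂ : c 2 0 = 0 := by simpa [h₂₂, hd] using h₂₀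
    left
    rw [det₀ s₀]
    simp [m, h₁, h₂]

/-- For `d ≥ 3`, there is no basis `w₁, w₂, w₃` of the degree-2 part of `A_d`
(equivalently, images of `X, Y, Z` under a unimodular integer matrix) with
`w₁w₂ = w₁w₃ = 0` and `w₁³` generating the degree-6 part (the `ℤ`-span of the images
of the degree-6 monomials); hence `A_d` is not isomorphic as a graded ring to the
cohomology of a connected-sum-decomposable quasitoric manifold over `C³(6)*`. -/
theorem stmt_16 (d : ℤ) (hd : 3 ≤ d) :
    ¬ ∃ (w : Fin 3 → MvPolynomial (Fin 3) ℤ ⧸ idealAd d) (c : Matrix (Fin 3) (Fin 3) ℤ),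
      IsUnit c.det ∧
      (∀ i, w i = ∑ j, c i j • Ideal.Quotient.mk (idealAd d) (X j)) ∧
      w 0 * w 1 = 0 ∧ w 0 * w 2 = 0 ∧
      Submodule.span ℤ {w 0 ^ 3} =
        Submodule.span ℤ ((fun p => Ideal.Quotient.mk (idealAd d) p) ''
          {q | ∃ i j k : Fin 3, q = X i * X j * X k}) := by
  rintro ⟨w, c, hdet, hw, h₀₁, h₀₂, -⟩
  have mem_of_mul_eq_zero {i : Fin 3} (h : w 0 * w i = 0) :
      linearForm (c 0) * linearForm (c i) ∈ idealAd d := by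
    rw [← Ideal.Quotient.eq_zero_iff_mem, map_mul]
    simpa [hw, linearForm, map_sum] using h
  obtain ⟨n, hn, hdvd⟩ : ∃ n, 2 ≤ n ∧ n ∣ c.det :=
    (dvd_det_of_mulVec_quadricPoint (by omega)
        (dotProduct_mul_dotProduct_quadricPoint_eq_zero (mem_of_mul_eq_zero h₀₁))
        (dotProduct_mul_dotProduct_quadricPoint_eq_zero (mem_of_mul_eq_zero h₀₂))).elim
      (fun h => ⟨d, by omega, h⟩) (fun h => ⟨d - 1, by omega, h⟩)
  rcases Int.isUnit_iff.mp (isUnit_of_dvd_unit hdvd hdet) with h | h <;> omega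
end

section
/- In the graded ring B = ℤ[X,Y,Z]/I_B arising as H*(M(λ₁₇)) for the quasitoric manifold over C⁴(7)* with characteristic matrix λ₁₇, every fourth power (aX+bY+cZ)⁴ is congruent to 0 modulo 4 when evaluated against the fundamental class; hence B is not isomorphic as a graded ring to A = H*(M(λ₉)), in which Z⁴ evaluates to -2 times the fundamental class. -/
/-- In `B = H^*(M(λ₁₇))` (presented abstractly by the evaluation of all degree-8
monomials in the degree-2 generators `X, Y, Z` against the fundamental class `fm`),
every fourth power `(aX + bY + cZ)⁴` is `4k·fm` for some integer `k`; hence no such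
element has fourth power `±2·fm`, and consequently `B` is not isomorphic as a graded
ring to `A = H^*(M(λ₉))`, in which `Z⁴ = -2·[M]`. -/
theorem stmt_17 (B : Type*) [CommRing B] (X Y Z fm : B)
    (hX4 : X ^ 4 = 0) (hY4 : Y ^ 4 = (-4 : ℤ) • fm) (hZ4 : Z ^ 4 = 0)
    (hX3Y : X ^ 3 * Y = 0) (hX2Y2 : X ^ 2 * Y ^ 2 = 0)
    (hXY3 : X * Y ^ 3 = fm) (hY3Z : Y ^ 3 * Z = (2 : ℤ) • fm)
    (hY2Z2 : Y ^ 2 * Z ^ 2 = 0) (hYZ3 : Y * Z ^ 3 = fm)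
    (hZ3X : Z ^ 3 * X = 0) (hZ2X2 : Z ^ 2 * X ^ 2 = 0)
    (hZX3 : Z * X ^ 3 = (-1 : ℤ) • fm)
    (hX2YZ : X ^ 2 * Y * Z = fm) (hXY2Z : X * Y ^ 2 * Z = (-1 : ℤ) • fm)
    (hXYZ2 : X * Y * Z ^ 2 = 0)
    (hfm : ∀ k : ℤ, k • fm = 0 → k = 0) :
    (∀ a b c : ℤ, ∃ k : ℤ, (a • X + b • Y + c • Z) ^ 4 = (4 * k) • fm) ∧
    (∀ a b c : ℤ, (a • X + b • Y + c • Z) ^ 4 ≠ (2 : ℤ) • fm ∧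
      (a • X + b • Y + c • Z) ^ 4 ≠ (-2 : ℤ) • fm) ∧
    (∀ (A : Type) (_ : CommRing A), ∀ ZA fmA : A, ZA ^ 4 = (-2 : ℤ) • fmA →
      ¬ ∃ (e : A ≃+* B) (a b c : ℤ),
        e ZA = a • X + b • Y + c • Z ∧ (e fmA = fm ∨ e fmA = -fm)) := by
  have key : ∀ a b c : ℤ, (a • X + b • Y + c • Z) ^ 4 =
      (4 * (-b^4 + a*b^3 + 2*b^3*c + b*c^3 - a^3*c + 3*a^2*b*c - 3*a*b^2*c)) • fm := by
    intro a b c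
    simp only [zsmul_eq_mul] at *
    push_cast
    linear_combination (a:B)^4 * hX4 + (b:B)^4 * hY4 + (c:B)^4 * hZ4 +
      4*(a:B)^3*(b:B) * hX3Y + 6*(a:B)^2*(b:B)^2 * hX2Y2 + 4*(a:B)*(b:B)^3 * hXY3 +
      4*(b:B)^3*(c:B) * hY3Z + 6*(b:B)^2*(c:B)^2 * hY2Z2 + 4*(b:B)*(c:B)^3 * hYZ3 +
      4*(c:B)^3*(a:B) * hZ3X + 6*(c:B)^2*(a:B)^2 * hZ2X2 + 4*(c:B)*(a:B)^3 * hZX3 +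
      12*(a:B)^2*(b:B)*(c:B) * hX2YZ + 12*(a:B)*(b:B)^2*(c:B) * hXY2Z +
      12*(a:B)*(b:B)*(c:B)^2 * hXYZ2
  have part1 : ∀ a b c : ℤ, ∃ k : ℤ, (a • X + b • Y + c • Z) ^ 4 = (4 * k) • fm :=
    fun a b c => ⟨_, key a b c⟩
  have part2 : ∀ a b c : ℤ, (a • X + b • Y + c • Z) ^ 4 ≠ (2 : ℤ) • fm ∧
      (a • X + b • Y + c • Z) ^ 4 ≠ (-2 : ℤ) • fm := by
    intro a b c
    obtain ⟨k, hk⟩ := part1 a b c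
    constructor <;> intro h <;> rw [hk] at h <;>
      [have := hfm (4*k - 2) (by rw [sub_smul, h, sub_self]);
       have := hfm (4*k + 2) (by rw [add_smul, h, ← add_smul]; norm_num)]
    · omega
    · omega
  refine ⟨part1, part2, ?_⟩
  rintro A _ ZA fmA hZA ⟨e, a, b, c, hw, hf⟩
  have h4 : e (ZA ^ 4) = (a • X + b • Y + c • Z) ^ 4 := by rw [map_pow, hw]
  rw [hZA, map_zsmul] at h4
  rcases hf with hf | hf <;> rw [hf] at h4
  · exact (part2 a b c).2 h4.symm
  · exact (part2 a b c).1 (by rw [← h4]; simp)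
end

section
/- If λ is an indecomposable integer characteristic matrix on C³(6)* normalized to the form (I₃ | v₄ v₅ v₆) with v₄ = (a₁, 1, a₃), v₆ = (1, c₂, 1), then a₃ ≠ 0 and c₂ ∉ {0, 1, -1}; moreover if |a₃| ≥ 2 then (up to sign normalization) a₃ = 2 and the middle column v₅ can be normalized to (b₁, 1, 1). -/
/-- The 3×3 minor of a 3×6 integer matrix on columns `a,b,c` (0-based). -/
def m3 (lam : Matrix (Fin 3) (Fin 6) ℤ) (a b c : Fin 6) : ℤ :=
  (lam.submatrix id ![a, b, c]).det

/-- `x = ±1`. -/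
def pm1 (x : ℤ) : Prop := x = 1 ∨ x = -1

/-- Let `lam = (I₃ | v₄ v₅ v₆)` be an indecomposable characteristic matrix on `C³(6)*`,
with `v₄ = (a₁, 1, a₃)`, `v₅ = (b₁, b₂, b₃)`, `v₆ = (1, c₂, 1)` (its minors on all
maximal simplices `{1,i,i+1}` (i=2,…,5), `{i,i+1,6}` (i=1,…,4) are `±1`, while the
minors on `{1,3,6}` and `{1,4,6}` are not `±1`).  Then `a₃ ≠ 0`, `c₂ ∉ {0, 1, -1}`,
and if `|a₃| ≥ 2` then (up to sign) `a₃ = 2` and `b₂, b₃ = ±1` (so `v₅` can be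
normalized to `(b₁, 1, 1)`). -/
theorem stmt_19 (lam : Matrix (Fin 3) (Fin 6) ℤ) (a₁ a₃ b₁ b₂ b₃ c₂ : ℤ)
    (hId : ∀ i j : Fin 3, lam i (Fin.castLE (by norm_num) j) = if i = j then 1 else 0)
    (h4 : lam 0 3 = a₁ ∧ lam 1 3 = 1 ∧ lam 2 3 = a₃)
    (h5 : lam 0 4 = b₁ ∧ lam 1 4 = b₂ ∧ lam 2 4 = b₃)
    (h6 : lam 0 5 = 1 ∧ lam 1 5 = c₂ ∧ lam 2 5 = 1)
    (hchar : pm1 (m3 lam 0 1 2) ∧ pm1 (m3 lam 0 2 3) ∧ pm1 (m3 lam 0 3 4) ∧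
      pm1 (m3 lam 0 4 5) ∧ pm1 (m3 lam 0 1 5) ∧ pm1 (m3 lam 1 2 5) ∧
      pm1 (m3 lam 2 3 5) ∧ pm1 (m3 lam 3 4 5))
    (hindec : ¬ pm1 (m3 lam 0 2 5) ∧ ¬ pm1 (m3 lam 0 3 5)) :
    a₃ ≠ 0 ∧ c₂ ≠ 0 ∧ c₂ ≠ 1 ∧ c₂ ≠ -1 ∧
    (2 ≤ |a₃| → (a₃ = 2 ∨ a₃ = -2) ∧ (b₂ = 1 ∨ b₂ = -1) ∧ (b₃ = 1 ∨ b₃ = -1)) := by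
  obtain ⟨h40,h41,h42⟩ := h4
  obtain ⟨h50,h51,h52⟩ := h5
  obtain ⟨h60,h61,h62⟩ := h6
  have E00 : lam 0 0 = 1 := by simpa using hId 0 0
  have E10 : lam 1 0 = 0 := by simpa using hId 1 0
  have E20 : lam 2 0 = 0 := by simpa using hId 2 0
  have E01 : lam 0 1 = 0 := by simpa using hId 0 1
  have E11 : lam 1 1 = 1 := by simpa using hId 1 1
  have E21 : lam 2 1 = 0 := by simpa using hId 2 1
  have E02 : lam 0 2 = 0 := by simpa using hId 0 2
  have E12 : lam 1 2 = 0 := by simpa using hId 1 2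
  have E22 : lam 2 2 = 1 := by simpa using hId 2 2
  -- minor values
  have v034 : m3 lam 0 3 4 = b₃ - a₃ * b₂ := by
    simp [m3, Matrix.det_fin_three, Matrix.submatrix_apply,
      h40,h41,h42,h50,h51,h52,E00,E10,E20]
    try ring
  have v045 : m3 lam 0 4 5 = b₂ - c₂ * b₃ := by
    simp [m3, Matrix.det_fin_three, Matrix.submatrix_apply,
      h50,h51,h52,h60,h61,h62,E00,E10,E20]
    try ring
  have v025 : m3 lam 0 2 5 = -c₂ := by
    simp [m3, Matrix.det_fin_three, Matrix.submatrix_apply,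
      h60,h61,h62,E00,E10,E20,E02,E12,E22]
  have v035 : m3 lam 0 3 5 = 1 - a₃ * c₂ := by
    simp [m3, Matrix.det_fin_three, Matrix.submatrix_apply,
      h40,h41,h42,h60,h61,h62,E00,E10,E20]
    try ring
  have hs : b₃ - a₃ * b₂ = 1 ∨ b₃ - a₃ * b₂ = -1 := v034 ▸ hchar.2.2.1
  have ht : b₂ - c₂ * b₃ = 1 ∨ b₂ - c₂ * b₃ = -1 := v045 ▸ hchar.2.2.2.1
  have hc : ¬ pm1 (-c₂) := v025 ▸ hindec.1
  have hac : ¬ pm1 (1 - a₃ * c₂) := v035 ▸ hindec.2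
  rw [pm1, not_or] at hc hac
  have hc1 : c₂ ≠ 1 := by intro h; exact hc.2 (by rw [h])
  have hc2 : c₂ ≠ -1 := by intro h; exact hc.1 (by rw [h]; ring)
  have hac0 : a₃ * c₂ ≠ 0 := by intro h; exact hac.1 (by rw [h]; ring)
  have ha0 : a₃ ≠ 0 := fun h => hac0 (by rw [h]; ring)
  have hc0 : c₂ ≠ 0 := fun h => hac0 (by rw [h]; ring)
  refine ⟨ha0, hc0, hc1, hc2, fun h2 => ?_⟩
  have hC : 2 ≤ |c₂| := by
    rcases abs_cases c₂ with ⟨h, _⟩ | ⟨h, _⟩ <;> omega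
  obtain ⟨s, hs1, heq1⟩ : ∃ s : ℤ, (s = 1 ∨ s = -1) ∧ b₃ - a₃ * b₂ = s := by
    rcases hs with h | h; exacts [⟨1, Or.inl rfl, h⟩, ⟨-1, Or.inr rfl, h⟩]
  obtain ⟨t, ht1, heq2⟩ : ∃ t : ℤ, (t = 1 ∨ t = -1) ∧ b₂ - c₂ * b₃ = t := by
    rcases ht with h | h; exacts [⟨1, Or.inl rfl, h⟩, ⟨-1, Or.inr rfl, h⟩]
  -- key identity: b₃ * (1 - a₃*c₂) = s + a₃*t
  have key : b₃ * (1 - a₃ * c₂) = s + a₃ * t := by linear_combination heq1 + a₃ * heq2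
  -- |b₃| ≤ 1
  have habs : |b₃| * |1 - a₃ * c₂| = |s + a₃ * t| := by rw [← abs_mul, key]
  have h1 : |s + a₃ * t| ≤ 1 + |a₃| := by
    calc |s + a₃ * t| ≤ |s| + |a₃ * t| := abs_add_le _ _
      _ = 1 + |a₃| := by rw [abs_mul]; rcases hs1 with h|h <;> rcases ht1 with h'|h' <;>
            simp [h, h']
  have h3 : 2 * |a₃| - 1 ≤ |1 - a₃ * c₂| := by
    have : |a₃| * |c₂| - 1 ≤ |1 - a₃ * c₂| := by
      rw [← abs_mul]
      rcases abs_cases (1 - a₃ * c₂) with ⟨h, _⟩ | ⟨h, _⟩ <;>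
        rcases abs_cases (a₃ * c₂) with ⟨h', _⟩ | ⟨h', _⟩ <;> omega
    nlinarith
  have hb3le : |b₃| ≤ 1 := by
    by_contra hcon
    push_neg at hcon
    have : |b₃| * (2 * |a₃| - 1) ≤ |b₃| * |1 - a₃ * c₂| := by
      apply mul_le_mul_of_nonneg_left (by omega) (abs_nonneg _)
    nlinarith
  have hb3ne : b₃ ≠ 0 := by
    intro h
    rw [h] at key
    simp at key
    have : |a₃ * t| = 1 := by
      rw [show a₃ * t = -s by linarith]
      rcases hs1 with h'|h' <;> simp [h']
    rw [abs_mul] at this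
    rcases ht1 with h'|h' <;> simp [h'] at this <;> omega
  have hb3 : b₃ = 1 ∨ b₃ = -1 := by
    rcases abs_cases b₃ with ⟨h, _⟩ | ⟨h, _⟩ <;> omega
  -- now b₂ : a₃ * b₂ = b₃ - s, |b₃ - s| ≤ 2
  have heq1' : a₃ * b₂ = b₃ - s := by linarith
  have hbd : |a₃| * |b₂| ≤ 2 := by
    rw [← abs_mul, heq1']
    rcases hb3 with h|h <;> rcases hs1 with h'|h' <;> simp [h, h']
  have hb2le : |b₂| ≤ 1 := by
    have h' := mul_le_mul_of_nonneg_right h2 (abs_nonneg b₂)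
    linarith
  have hb2ne : b₂ ≠ 0 := by
    intro h
    rw [h] at heq2
    have : |c₂| * |b₃| = 1 := by
      rw [← abs_mul, show c₂ * b₃ = -t by linarith]
      rcases ht1 with h'|h' <;> simp [h']
    rcases hb3 with h'|h' <;> rw [h'] at this <;> simp at this <;> omega
  have hb2 : b₂ = 1 ∨ b₂ = -1 := by
    rcases abs_cases b₂ with ⟨h, _⟩ | ⟨h, _⟩ <;> omega
  refine ⟨?_, hb2, hb3⟩
  have : |a₃| = 2 := by
    have : |a₃| * |b₂| = |a₃| := by rcases hb2 with h|h <;> rw [h] <;> simp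
    -- |a₃| ≤ 2 from hbd, ≥ 2 from h2
    omega
  rcases abs_cases a₃ with ⟨h, _⟩ | ⟨h, _⟩ <;> omega
end
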